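/- arXiv:2412.20234 — 5 statements merged into one kernel-verified Lean document; each statement's English description precedes it below -/
import Mathlib

section
/- In any finite oriented digraph (no loops, no digons) with at least one vertex, a vertex u of minimum out-degree satisfies |N^{++}(u)| ≥ (1/2)|N^+(u)|, where N^+(u) is the set of out-neighbors of u and N^{++}(u) the set of vertices at positive distance exactly 2 from u. -/
open Finset
open scoped Classical

/-- Out-neighbors: vertices at positive distance exactly 1 from `u`. -/
noncomputable def firstNbhd {V : Type*} [Fintype V] (A : V → V → Prop) (u : V) : Finset V :=
  Finset.univ.filter (fun v => A u v)

/-- Second neighborhood: vertices at positive distance exactly 2 from `u`. -/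
noncomputable def secondNbhd {V : Type*} [Fintype V] (A : V → V → Prop) (u : V) : Finset V :=
  Finset.univ.filter (fun v => ¬ A u v ∧ ∃ x, A u x ∧ A x v)

/-- In a finite oriented digraph (no loops, no digons) with at least one vertex,
a vertex of minimum out-degree has second neighborhood at least half as large as
its first neighborhood. -/
theorem stmt0 {V : Type*} [Fintype V] [Nonempty V] (A : V → V → Prop)
    (noloop : ∀ v, ¬ A v v) (nodigon : ∀ x y, A x y → ¬ A y x)
    (u : V) (hmin : ∀ v : V, (firstNbhd A u).card ≤ (firstNbhd A v).card) :
    ((secondNbhd A u).card : ℝ) ≥ (1 / 2) * (firstNbhd A u).card := by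
  classical
  set S := firstNbhd A u with hS
  set s := (secondNbhd A u).card with hs
  have memN : ∀ (a w : V), w ∈ firstNbhd A a ↔ A a w := by
    intro a w; simp [firstNbhd]
  have memS : ∀ w, w ∈ S ↔ A u w := fun w => by rw [hS]; exact memN u w
  have memSec : ∀ w, w ∈ secondNbhd A u ↔ ¬ A u w ∧ ∃ x, A u x ∧ A x w := by
    intro w; simp [secondNbhd]
  -- key claim in ℕ: 2 * s ≥ S.card
  have key : S.card ≤ 2 * s := by
    rcases Nat.eq_zero_or_pos S.card with hd | hd
    · omega
    obtain ⟨k, hk⟩ : ∃ k, S.card = k + 1 := ⟨S.card - 1, by omega⟩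
    -- per-vertex bound
    have hvert : ∀ v ∈ S, (S.filter (fun w => A v w)).card
        + (S.filter (fun w => A w v)).card ≤ k := by
      intro v hv
      have hdisj : Disjoint (S.filter (fun w => A v w)) (S.filter (fun w => A w v)) := by
        rw [Finset.disjoint_left]
        intro w h1 h2
        exact nodigon v w (Finset.mem_filter.1 h1).2 (Finset.mem_filter.1 h2).2
      have hsub : (S.filter (fun w => A v w)) ∪ (S.filter (fun w => A w v)) ⊆ S.erase v := by
        intro w hw
        rcases Finset.mem_union.1 hw with h | h
        · refine Finset.mem_erase.2 ⟨fun e => noloop v ?_, (Finset.mem_filter.1 h).1⟩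
          have := (Finset.mem_filter.1 h).2; rwa [e] at this
        · refine Finset.mem_erase.2 ⟨fun e => noloop v ?_, (Finset.mem_filter.1 h).1⟩
          have := (Finset.mem_filter.1 h).2; rwa [e] at this
      calc (S.filter (fun w => A v w)).card + (S.filter (fun w => A w v)).card
          = ((S.filter (fun w => A v w)) ∪ (S.filter (fun w => A w v))).card :=
            (Finset.card_union_of_disjoint hdisj).symm
        _ ≤ (S.erase v).card := Finset.card_le_card hsub
        _ ≤ k := by rw [Finset.card_erase_of_mem hv]; omega
    -- double counting: the two sums agree
    have heq : (∑ v ∈ S, (S.filter (fun w => A v w)).card)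
        = ∑ v ∈ S, (S.filter (fun w => A w v)).card := by
      simp only [Finset.card_filter]
      exact Finset.sum_comm
    have hsum2 : 2 * ∑ v ∈ S, (S.filter (fun w => A v w)).card ≤ S.card * k := by
      have h := Finset.sum_le_sum hvert
      rw [Finset.sum_add_distrib, ← heq, Finset.sum_const, smul_eq_mul] at h
      omega
    -- pick a vertex of small inner out-degree
    have hex : ∃ v ∈ S, 2 * (S.filter (fun w => A v w)).card ≤ k := by
      by_contra h
      push_neg at h
      have hbig : S.card * (k + 1) ≤ 2 * ∑ v ∈ S, (S.filter (fun w => A v w)).card := by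
        rw [Finset.mul_sum]
        calc S.card * (k + 1) = ∑ _v ∈ S, (k + 1) := by
              rw [Finset.sum_const, smul_eq_mul]
          _ ≤ ∑ v ∈ S, 2 * (S.filter (fun w => A v w)).card :=
            Finset.sum_le_sum (fun v hv => h v hv)
      have : S.card * (k + 1) ≤ S.card * k := le_trans hbig hsum2
      have : S.card * k < S.card * (k + 1) :=
        by nlinarith
      omega
    obtain ⟨v, hvS, hv2⟩ := hex
    -- N⁺(v) ⊆ (N⁺(u) ∩ N⁺(v)) ∪ N⁺⁺(u)
    have hsub : firstNbhd A v ⊆ (S.filter (fun w => A v w)) ∪ secondNbhd A u := by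
      intro w hw
      have hvw : A v w := (memN v w).1 hw
      by_cases huw : A u w
      · exact Finset.mem_union_left _ (Finset.mem_filter.2 ⟨(memS w).2 huw, hvw⟩)
      · exact Finset.mem_union_right _ ((memSec w).2 ⟨huw, v, (memS v).1 hvS, hvw⟩)
    have hcard : S.card ≤ (S.filter (fun w => A v w)).card + s := by
      calc S.card ≤ (firstNbhd A v).card := hmin v
        _ ≤ ((S.filter (fun w => A v w)) ∪ secondNbhd A u).card := Finset.card_le_card hsub
        _ ≤ (S.filter (fun w => A v w)).card + s := Finset.card_union_le _ _
    omega
  have : (S.card : ℝ) ≤ 2 * s := by exact_mod_cast key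
  linarith
end

section
/- Let γ be the real root in [0,1] of 8x^5 + 4x^4 − 12x^3 − 7x^2 + 2x + 4 = 0, w = γ^2 + 2γ^3. Then c₁₁ := (w−1)γ − (w+γ^2)/2 < 0 and (c₁₂ − c₁₄)^2 − 4c₁₁(c₂₂ + c₁₄) < 0, where c₁₂ = γ^2 + (1+γ)(w − (w−1)γ), c₁₄ = w − (w−1)γ, c₂₂ = −w(1+γ)^2/2. Consequently, for all real y₁, y₂, c₁₁y₁² + (c₁₂ − c₁₄)y₁y₂ + (c₂₂ + c₁₄)y₂² ≤ 0. -/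
/-- With `γ` the root in `[0,1]` of `8x^5 + 4x^4 - 12x^3 - 7x^2 + 2x + 4` and
`w = γ^2 + 2γ^3`: `c₁₁ < 0`, the discriminant `(c₁₂-c₁₄)^2 - 4c₁₁(c₂₂+c₁₄)` is
negative, and hence the binary quadratic form is nonpositive. -/
theorem stmt7 (γ w c11 c12 c14 c22 : ℝ) (hγ : γ ∈ Set.Icc (0 : ℝ) 1)
    (hroot : 8 * γ ^ 5 + 4 * γ ^ 4 - 12 * γ ^ 3 - 7 * γ ^ 2 + 2 * γ + 4 = 0)
    (hw : w = γ ^ 2 + 2 * γ ^ 3)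
    (hc11 : c11 = (w - 1) * γ - (w + γ ^ 2) / 2)
    (hc12 : c12 = γ ^ 2 + (1 + γ) * (w - (w - 1) * γ))
    (hc14 : c14 = w - (w - 1) * γ)
    (hc22 : c22 = -w * (1 + γ) ^ 2 / 2) :
    c11 < 0 ∧ (c12 - c14) ^ 2 - 4 * c11 * (c22 + c14) < 0 ∧
    ∀ y1 y2 : ℝ, c11 * y1 ^ 2 + (c12 - c14) * y1 * y2 + (c22 + c14) * y2 ^ 2 ≤ 0 := by
  obtain ⟨h0, h1⟩ := hγ
  have hlo : (7 : ℝ)/10 ≤ γ := by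
    nlinarith [sq_nonneg γ, sq_nonneg (γ - 7/10), sq_nonneg (γ^2 - γ), sq_nonneg (γ^2 - 1/2),
      mul_nonneg h0 h0, mul_nonneg (mul_nonneg h0 h0) h0, sq_nonneg (γ^2 - 7/10*γ)]
  have hhi : γ ≤ (73 : ℝ)/100 := by
    nlinarith [sq_nonneg γ, sq_nonneg (γ - 73/100), sq_nonneg (1 - γ), mul_nonneg h0 (sub_nonneg.2 h1),
      mul_nonneg (mul_nonneg h0 h0) (sub_nonneg.2 h1), sq_nonneg (γ^2 - γ)]
  have hc11neg : c11 < 0 := by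
    subst hw hc11
    nlinarith [sq_nonneg γ]
  have hdisc : (c12 - c14) ^ 2 - 4 * c11 * (c22 + c14) < 0 := by
    subst hw hc11 hc12 hc14 hc22
    nlinarith [sq_nonneg (γ - 7/10), sq_nonneg (γ - 73/100), mul_nonneg (sub_nonneg.2 hlo) (sub_nonneg.2 hhi),
      sq_nonneg (γ^2 - 1/2), mul_nonneg (mul_nonneg (sub_nonneg.2 hlo) (sub_nonneg.2 hhi)) (sub_nonneg.2 hhi),
      mul_nonneg (mul_nonneg (sub_nonneg.2 hlo) (sub_nonneg.2 hhi)) (sub_nonneg.2 hlo)]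
  refine ⟨hc11neg, hdisc, fun y1 y2 => ?_⟩
  nlinarith [sq_nonneg (2 * c11 * y1 + (c12 - c14) * y2), sq_nonneg y2,
    mul_pos (neg_pos.2 hc11neg) (neg_pos.2 (by linarith [hdisc] : (c12 - c14) ^ 2 - 4 * c11 * (c22 + c14) < 0)),
    mul_nonneg (sq_nonneg y2) (neg_nonneg.2 (le_of_lt hdisc))]
end

section
/- Let γ be the real root in [0,1] of 8x^5 + 4x^4 − 12x^3 − 7x^2 + 2x + 4 = 0, w = γ^2 + 2γ^3, θ = 2 + 2γ − 4γ^3, ρ = 1 + θ − θ/γ. With c₁₄ = w − (w−1)γ, c₂₄ = γ + γ^3 − w(1+γ), c₂₃ = θ − γ^2 − (1+γ)(w − (w−1)γ), c₃₄ = (γ + γ^2 − 1)θ − w + (w−1)γ, all four coefficients c₁₄, c₁₄ + c₂₄, −(c₂₃ + ρc₁₄), and c₂₃ − c₃₄ − (θ/γ)(c₁₄ + c₂₄) are strictly positive. -/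
/-- With `γ` the root in `[0,1]` of `8x^5 + 4x^4 - 12x^3 - 7x^2 + 2x + 4`,
`w = γ^2 + 2γ^3`, `θ = 2 + 2γ - 4γ^3`, `ρ = 1 + θ - θ/γ`, the four combination
coefficients `c₁₄`, `c₁₄+c₂₄`, `-(c₂₃+ρc₁₄)` and `c₂₃-c₃₄-(θ/γ)(c₁₄+c₂₄)` are
all strictly positive. -/
theorem stmt8 (γ w θ ρ c14 c24 c23 c34 : ℝ) (hγ : γ ∈ Set.Icc (0 : ℝ) 1)
    (hroot : 8 * γ ^ 5 + 4 * γ ^ 4 - 12 * γ ^ 3 - 7 * γ ^ 2 + 2 * γ + 4 = 0)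
    (hw : w = γ ^ 2 + 2 * γ ^ 3) (hθ : θ = 2 + 2 * γ - 4 * γ ^ 3)
    (hρ : ρ = 1 + θ - θ / γ)
    (hc14 : c14 = w - (w - 1) * γ)
    (hc24 : c24 = γ + γ ^ 3 - w * (1 + γ))
    (hc23 : c23 = θ - γ ^ 2 - (1 + γ) * (w - (w - 1) * γ))
    (hc34 : c34 = (γ + γ ^ 2 - 1) * θ - w + (w - 1) * γ) :
    0 < c14 ∧ 0 < c14 + c24 ∧ 0 < -(c23 + ρ * c14) ∧
      0 < c23 - c34 - (θ / γ) * (c14 + c24) := by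
  obtain ⟨h0, h1⟩ := hγ
  have hpos : 0 < γ := by
    rcases h0.lt_or_eq with h | h
    · exact h
    · rw [← h] at hroot; norm_num at hroot
  have hne : γ ≠ 0 := hpos.ne'
  have hlo : (0.715 : ℝ) < γ := by
    by_contra h
    push_neg at h
    nlinarith [sq_nonneg (γ - 0.715), sq_nonneg γ, mul_nonneg h0 h0,
      mul_nonneg (mul_nonneg h0 h0) h0, sq_nonneg (γ - 0.3), sq_nonneg (γ^2 - 0.5),
      mul_nonneg (sub_nonneg.2 h) h0, mul_nonneg (mul_nonneg (sub_nonneg.2 h) h0) h0,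
      mul_nonneg (mul_nonneg (mul_nonneg (sub_nonneg.2 h) h0) h0) h0]
  have hhi : γ < 0.716 := by
    by_contra h
    push_neg at h
    nlinarith [sq_nonneg (γ - 0.716), sq_nonneg (γ - 1), mul_nonneg (sub_nonneg.2 h) (sub_nonneg.2 h1),
      mul_nonneg (mul_nonneg (sub_nonneg.2 h) (sub_nonneg.2 h1)) h0,
      mul_nonneg (mul_nonneg (sub_nonneg.2 h) (sub_nonneg.2 h1)) (sub_nonneg.2 h),
      mul_nonneg (mul_nonneg (sub_nonneg.2 h) (sub_nonneg.2 h1)) (sub_nonneg.2 h1)]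
  subst hw hθ hρ hc14 hc24 hc23 hc34
  refine ⟨by nlinarith, by nlinarith, ?_, ?_⟩
  · have hQ : 0 < 2*γ^3 - 5*γ^4 - γ^5 + 2*γ^6 + 12*γ^7 - 8*γ^8 := by
      nlinarith [mul_nonneg (mul_nonneg h0 h0) h0, sq_nonneg (γ - 0.7155),
        mul_nonneg (mul_nonneg (mul_nonneg h0 h0) h0) h0,
        mul_pos hpos hpos, mul_pos (mul_pos hpos hpos) hpos,
        mul_nonneg (mul_nonneg (sub_nonneg.2 hlo.le) (sub_nonneg.2 hhi.le)) h0,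
        mul_nonneg (sub_nonneg.2 hlo.le) (sub_nonneg.2 hhi.le)]
    have heq : -((2 + 2*γ - 4*γ^3) - γ^2 - (1 + γ) * ((γ^2 + 2*γ^3) - ((γ^2 + 2*γ^3) - 1) * γ)
        + (1 + (2 + 2*γ - 4*γ^3) - (2 + 2*γ - 4*γ^3) / γ) * ((γ^2 + 2*γ^3) - ((γ^2 + 2*γ^3) - 1) * γ))
        = (2*γ^3 - 5*γ^4 - γ^5 + 2*γ^6 + 12*γ^7 - 8*γ^8) / γ := by
      field_simp
      ring
    calc (0:ℝ) < (2*γ^3 - 5*γ^4 - γ^5 + 2*γ^6 + 12*γ^7 - 8*γ^8) / γ := div_pos hQ hpos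
    _ = _ := heq.symm
  · have hQ : 0 < -2*γ^2 - 4*γ^3 + 7*γ^4 + 11*γ^5 + 2*γ^6 - 16*γ^7 := by
      nlinarith [mul_nonneg (mul_nonneg h0 h0) h0, sq_nonneg (γ - 0.7155),
        mul_nonneg (mul_nonneg (mul_nonneg h0 h0) h0) h0,
        mul_pos hpos hpos, mul_pos (mul_pos hpos hpos) hpos,
        mul_nonneg (mul_nonneg (sub_nonneg.2 hlo.le) (sub_nonneg.2 hhi.le)) h0,
        mul_nonneg (sub_nonneg.2 hlo.le) (sub_nonneg.2 hhi.le)]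
    have heq : ((2 + 2*γ - 4*γ^3) - γ^2 - (1 + γ) * ((γ^2 + 2*γ^3) - ((γ^2 + 2*γ^3) - 1) * γ))
        - ((γ + γ^2 - 1) * (2 + 2*γ - 4*γ^3) - (γ^2 + 2*γ^3) + ((γ^2 + 2*γ^3) - 1) * γ)
        - ((2 + 2*γ - 4*γ^3) / γ) * (((γ^2 + 2*γ^3) - ((γ^2 + 2*γ^3) - 1) * γ)
            + (γ + γ^3 - (γ^2 + 2*γ^3) * (1 + γ)))
        = (-2*γ^2 - 4*γ^3 + 7*γ^4 + 11*γ^5 + 2*γ^6 - 16*γ^7) / γ := by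
      field_simp
      ring
    calc (0:ℝ) < (-2*γ^2 - 4*γ^3 + 7*γ^4 + 11*γ^5 + 2*γ^6 - 16*γ^7) / γ := div_pos hQ hpos
    _ = _ := heq.symm
end

section
/- Let γ be the real root in [0,1] of 8x^5 + 4x^4 − 12x^3 − 7x^2 + 2x + 4 = 0, w = γ^2 + 2γ^3, θ = 2 + 2γ − 4γ^3, ρ = 1 + θ − θ/γ. If real numbers y₁,y₂,y₃,y₄ satisfy (y₂−y₁+ρy₃)(y₂+y₄) ≥ 0, ((θ/γ)y₃−y₂)y₄ ≥ 0, (y₂+y₄)y₃ ≥ 0, and y₃y₄ ≥ 0, then F(y₁,y₂,y₃,y₄) ≤ 0, where F = c₁₁y₁² + c₁₂y₁y₂ + c₁₄y₁y₄ + c₂₂y₂² + c₂₃y₂y₃ + c₂₄y₂y₄ + c₃₄y₃y₄ with c₁₁=(w−1)γ−(w+γ²)/2, c₁₂=γ²+(1+γ)(w−(w−1)γ), c₁₄=w−(w−1)γ, c₂₂=−w(1+γ)²/2, c₂₃=θ−γ²−(1+γ)(w−(w−1)γ), c₂₄=γ+γ³−w(1+γ), c₃₄=(γ+γ²−1)θ−w+(w−1)γ.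 -/
/-- Negative-semidefinite 2×2 quadratic form. -/
theorem quad_aux_stmt10 (A B C2 y1 y2 : ℝ) (hA : A < 0)
    (hdet : 0 ≤ 4 * (A * B) - C2 ^ 2) :
    A * y1 ^ 2 + C2 * y1 * y2 + B * y2 ^ 2 ≤ 0 := by
  nlinarith [sq_nonneg (2 * A * y1 + C2 * y2), mul_nonneg hdet (sq_nonneg y2), hA]

set_option maxHeartbeats 1600000 in
/-- If the four products `P₁,…,P₄` are nonnegative, then the quadratic form `F`
(with the coefficients from Lemma 3.1) is nonpositive. -/
theorem stmt10 (γ w θ ρ c11 c12 c14 c22 c23 c24 c34 : ℝ)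
    (hγ : γ ∈ Set.Icc (0 : ℝ) 1)
    (hroot : 8 * γ ^ 5 + 4 * γ ^ 4 - 12 * γ ^ 3 - 7 * γ ^ 2 + 2 * γ + 4 = 0)
    (hw : w = γ ^ 2 + 2 * γ ^ 3) (hθ : θ = 2 + 2 * γ - 4 * γ ^ 3)
    (hρ : ρ = 1 + θ - θ / γ)
    (hc11 : c11 = (w - 1) * γ - (w + γ ^ 2) / 2)
    (hc12 : c12 = γ ^ 2 + (1 + γ) * (w - (w - 1) * γ))
    (hc14 : c14 = w - (w - 1) * γ)
    (hc22 : c22 = -w * (1 + γ) ^ 2 / 2)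
    (hc23 : c23 = θ - γ ^ 2 - (1 + γ) * (w - (w - 1) * γ))
    (hc24 : c24 = γ + γ ^ 3 - w * (1 + γ))
    (hc34 : c34 = (γ + γ ^ 2 - 1) * θ - w + (w - 1) * γ)
    (y1 y2 y3 y4 : ℝ)
    (hP1 : (y2 - y1 + ρ * y3) * (y2 + y4) ≥ 0)
    (hP2 : ((θ / γ) * y3 - y2) * y4 ≥ 0)
    (hP3 : (y2 + y4) * y3 ≥ 0)
    (hP4 : y3 * y4 ≥ 0) :
    c11 * y1 ^ 2 + c12 * y1 * y2 + c14 * y1 * y4 + c22 * y2 ^ 2 +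
      c23 * y2 * y3 + c24 * y2 * y4 + c34 * y3 * y4 ≤ 0 := by
  obtain ⟨hγ0, hγ1⟩ := hγ
  have hγpos : 0 < γ := by
    rcases hγ0.lt_or_eq with h | h
    · exact h
    · exfalso; rw [← h] at hroot; norm_num at hroot
  have hne : γ ≠ 0 := ne_of_gt hγpos
  -- tight rational bounds on γ from the quintic
  have hlo : (143 : ℝ) / 200 ≤ γ := by
    by_contra h
    push_neg at h
    have hc : (0 : ℝ) < 143 / 200 - γ := by linarith
    linarith [hroot, pow_pos hc 5,
      mul_nonneg (pow_nonneg hγ0 1) (pow_nonneg hc.le 4),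
      mul_nonneg (pow_nonneg hγ0 2) (pow_nonneg hc.le 3),
      mul_nonneg (pow_nonneg hγ0 3) (pow_nonneg hc.le 2),
      mul_nonneg (pow_nonneg hγ0 4) (pow_nonneg hc.le 1),
      pow_nonneg hγ0 5]
  have hhi : γ ≤ (179 : ℝ) / 250 := by
    by_contra h
    push_neg at h
    have hc : (0 : ℝ) < γ - 179 / 250 := by linarith
    have h1 : (0 : ℝ) ≤ 1 - γ := by linarith
    linarith [hroot, pow_pos hc 5,
      mul_nonneg (pow_nonneg hc.le 4) (pow_nonneg h1 1),
      mul_nonneg (pow_nonneg hc.le 3) (pow_nonneg h1 2),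
      mul_nonneg (pow_nonneg hc.le 2) (pow_nonneg h1 3),
      mul_nonneg (pow_nonneg hc.le 1) (pow_nonneg h1 4),
      pow_nonneg h1 5]
  have ha : (0 : ℝ) ≤ γ - 143 / 200 := by linarith
  have hb : (0 : ℝ) ≤ 179 / 250 - γ := by linarith
  -- sign facts for the multipliers
  have hL1 : 0 ≤ γ + γ ^ 2 + γ ^ 3 - 2 * γ ^ 4 := by
    linarith [mul_nonneg (pow_nonneg ha 0) (pow_nonneg hb 4), mul_nonneg (pow_nonneg ha 1) (pow_nonneg hb 3), mul_nonneg (pow_nonneg ha 2) (pow_nonneg hb 2), mul_nonneg (pow_nonneg ha 3) (pow_nonneg hb 1), mul_nonneg (pow_nonneg ha 4) (pow_nonneg hb 0)]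
  have hL2 : 0 ≤ 2 * γ - γ ^ 3 - 4 * γ ^ 4 := by
    linarith [mul_nonneg (pow_nonneg ha 0) (pow_nonneg hb 4), mul_nonneg (pow_nonneg ha 1) (pow_nonneg hb 3), mul_nonneg (pow_nonneg ha 2) (pow_nonneg hb 2), mul_nonneg (pow_nonneg ha 3) (pow_nonneg hb 1), mul_nonneg (pow_nonneg ha 4) (pow_nonneg hb 0)]
  have hM3 : 0 ≤ 2 * γ ^ 3 - 5 * γ ^ 4 - γ ^ 5 + 2 * γ ^ 6 + 12 * γ ^ 7 - 8 * γ ^ 8 := by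
    linarith [mul_nonneg (pow_nonneg ha 0) (pow_nonneg hb 8), mul_nonneg (pow_nonneg ha 1) (pow_nonneg hb 7), mul_nonneg (pow_nonneg ha 2) (pow_nonneg hb 6), mul_nonneg (pow_nonneg ha 3) (pow_nonneg hb 5), mul_nonneg (pow_nonneg ha 4) (pow_nonneg hb 4), mul_nonneg (pow_nonneg ha 5) (pow_nonneg hb 3), mul_nonneg (pow_nonneg ha 6) (pow_nonneg hb 2), mul_nonneg (pow_nonneg ha 7) (pow_nonneg hb 1), mul_nonneg (pow_nonneg ha 8) (pow_nonneg hb 0)]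
  have hM4 : 0 ≤ -2 * γ ^ 2 - 4 * γ ^ 3 + 7 * γ ^ 4 + 11 * γ ^ 5 + 2 * γ ^ 6 - 16 * γ ^ 7 := by
    linarith [mul_nonneg (pow_nonneg ha 0) (pow_nonneg hb 7), mul_nonneg (pow_nonneg ha 1) (pow_nonneg hb 6), mul_nonneg (pow_nonneg ha 2) (pow_nonneg hb 5), mul_nonneg (pow_nonneg ha 3) (pow_nonneg hb 4), mul_nonneg (pow_nonneg ha 4) (pow_nonneg hb 3), mul_nonneg (pow_nonneg ha 5) (pow_nonneg hb 2), mul_nonneg (pow_nonneg ha 6) (pow_nonneg hb 1), mul_nonneg (pow_nonneg ha 7) (pow_nonneg hb 0)]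
  have hA : -γ - γ ^ 2 + 2 * γ ^ 4 < 0 := by
    linarith [mul_nonneg (pow_nonneg ha 0) (pow_nonneg hb 4), mul_nonneg (pow_nonneg ha 1) (pow_nonneg hb 3), mul_nonneg (pow_nonneg ha 2) (pow_nonneg hb 2), mul_nonneg (pow_nonneg ha 3) (pow_nonneg hb 1), mul_nonneg (pow_nonneg ha 4) (pow_nonneg hb 0)]
  have hdet : 0 ≤ -4 * γ ^ 2 - 6 * γ ^ 3 - 2 * γ ^ 4 + 26 * γ ^ 5 + 21 * γ ^ 6 + 2 * γ ^ 7 - 33 * γ ^ 8 - 4 * γ ^ 9 - 4 * γ ^ 10 := by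
    linarith [mul_nonneg (pow_nonneg ha 0) (pow_nonneg hb 10), mul_nonneg (pow_nonneg ha 1) (pow_nonneg hb 9), mul_nonneg (pow_nonneg ha 2) (pow_nonneg hb 8), mul_nonneg (pow_nonneg ha 3) (pow_nonneg hb 7), mul_nonneg (pow_nonneg ha 4) (pow_nonneg hb 6), mul_nonneg (pow_nonneg ha 5) (pow_nonneg hb 5), mul_nonneg (pow_nonneg ha 6) (pow_nonneg hb 4), mul_nonneg (pow_nonneg ha 7) (pow_nonneg hb 3), mul_nonneg (pow_nonneg ha 8) (pow_nonneg hb 2), mul_nonneg (pow_nonneg ha 9) (pow_nonneg hb 1), mul_nonneg (pow_nonneg ha 10) (pow_nonneg hb 0)]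
  subst hw hθ hρ hc11 hc12 hc14 hc22 hc23 hc24 hc34
  -- clear denominators in P1, P2
  have hdivg : (2 + 2 * γ - 4 * γ ^ 3) / γ * γ = 2 + 2 * γ - 4 * γ ^ 3 :=
    div_mul_cancel₀ _ hne
  have e1 : (γ * (y2 - y1) + (-2 + γ + 2 * γ ^ 2 + 4 * γ ^ 3 - 4 * γ ^ 4) * y3) * (y2 + y4)
      = γ * ((y2 - y1 + (1 + (2 + 2 * γ - 4 * γ ^ 3) - (2 + 2 * γ - 4 * γ ^ 3) / γ) * y3) * (y2 + y4)) := by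
    linear_combination (y3 * (y2 + y4)) * hdivg
  have hQ1 : 0 ≤ (γ * (y2 - y1) + (-2 + γ + 2 * γ ^ 2 + 4 * γ ^ 3 - 4 * γ ^ 4) * y3) * (y2 + y4) := by
    rw [e1]; exact mul_nonneg hγpos.le hP1
  have e2 : ((2 + 2 * γ - 4 * γ ^ 3) * y3 - γ * y2) * y4
      = γ * ((((2 + 2 * γ - 4 * γ ^ 3) / γ) * y3 - y2) * y4) := by
    linear_combination (-(y3 * y4)) * hdivg
  have hQ2 : 0 ≤ ((2 + 2 * γ - 4 * γ ^ 3) * y3 - γ * y2) * y4 := by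
    rw [e2]; exact mul_nonneg hγpos.le hP2
  -- the nonnegative multiplier products
  have hT1 : 0 ≤ (γ + γ ^ 2 + γ ^ 3 - 2 * γ ^ 4) *
      ((γ * (y2 - y1) + (-2 + γ + 2 * γ ^ 2 + 4 * γ ^ 3 - 4 * γ ^ 4) * y3) * (y2 + y4)) :=
    mul_nonneg hL1 hQ1
  have hT2 : 0 ≤ (2 * γ - γ ^ 3 - 4 * γ ^ 4) *
      (((2 + 2 * γ - 4 * γ ^ 3) * y3 - γ * y2) * y4) :=
    mul_nonneg hL2 hQ2
  have hT3 : 0 ≤ (2 * γ ^ 3 - 5 * γ ^ 4 - γ ^ 5 + 2 * γ ^ 6 + 12 * γ ^ 7 - 8 * γ ^ 8) *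
      ((y2 + y4) * y3) := mul_nonneg hM3 hP3
  have hT4 : 0 ≤ (-2 * γ ^ 2 - 4 * γ ^ 3 + 7 * γ ^ 4 + 11 * γ ^ 5 + 2 * γ ^ 6 - 16 * γ ^ 7) *
      (y3 * y4) := mul_nonneg hM4 hP4
  -- negative semidefinite residual quadratic form in y1, y2
  have hQuad : (-γ - γ ^ 2 + 2 * γ ^ 4) * y1 ^ 2 +
      (2 * γ ^ 2 + γ ^ 3 + γ ^ 4 - 2 * γ ^ 5) * y1 * y2 +
      (γ + γ ^ 2 / 2 - γ ^ 3 - (9 / 2) * γ ^ 4 - γ ^ 5) * y2 ^ 2 ≤ 0 := by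
    apply quad_aux_stmt10 _ _ _ _ _ hA
    linarith [hdet]
  have hγQuad : γ * ((-γ - γ ^ 2 + 2 * γ ^ 4) * y1 ^ 2 +
      (2 * γ ^ 2 + γ ^ 3 + γ ^ 4 - 2 * γ ^ 5) * y1 * y2 +
      (γ + γ ^ 2 / 2 - γ ^ 3 - (9 / 2) * γ ^ 4 - γ ^ 5) * y2 ^ 2) ≤ 0 :=
    mul_nonpos_of_nonneg_of_nonpos hγpos.le hQuad
  -- the key polynomial identity
  have key : γ * ((-γ - γ ^ 2 + 2 * γ ^ 4) * y1 ^ 2 +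
        (γ + 3 * γ ^ 2 + 2 * γ ^ 3 - γ ^ 4 - 2 * γ ^ 5) * y1 * y2 +
        (γ + γ ^ 2 + γ ^ 3 - 2 * γ ^ 4) * y1 * y4 +
        (-(γ ^ 2) - 4 * γ ^ 3 - 5 * γ ^ 4 - 2 * γ ^ 5) / 2 * y2 ^ 2 +
        (2 + γ - 3 * γ ^ 2 - 6 * γ ^ 3 + γ ^ 4 + 2 * γ ^ 5) * y2 * y3 +
        (γ - γ ^ 2 - 2 * γ ^ 3 - 2 * γ ^ 4) * y2 * y4 +
        (-2 - γ + 3 * γ ^ 2 + 5 * γ ^ 3 - 2 * γ ^ 4 - 4 * γ ^ 5) * y3 * y4)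
      = γ * ((-γ - γ ^ 2 + 2 * γ ^ 4) * y1 ^ 2 +
          (2 * γ ^ 2 + γ ^ 3 + γ ^ 4 - 2 * γ ^ 5) * y1 * y2 +
          (γ + γ ^ 2 / 2 - γ ^ 3 - (9 / 2) * γ ^ 4 - γ ^ 5) * y2 ^ 2)
        - (γ + γ ^ 2 + γ ^ 3 - 2 * γ ^ 4) *
            ((γ * (y2 - y1) + (-2 + γ + 2 * γ ^ 2 + 4 * γ ^ 3 - 4 * γ ^ 4) * y3) * (y2 + y4))
        - (2 * γ - γ ^ 3 - 4 * γ ^ 4) *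
            (((2 + 2 * γ - 4 * γ ^ 3) * y3 - γ * y2) * y4)
        - (2 * γ ^ 3 - 5 * γ ^ 4 - γ ^ 5 + 2 * γ ^ 6 + 12 * γ ^ 7 - 8 * γ ^ 8) *
            ((y2 + y4) * y3)
        - (-2 * γ ^ 2 - 4 * γ ^ 3 + 7 * γ ^ 4 + 11 * γ ^ 5 + 2 * γ ^ 6 - 16 * γ ^ 7) *
            (y3 * y4) := by
    ring
  by_contra hF
  push_neg at hF
  have hγF := mul_pos hγpos hF
  linarith [key, hT1, hT2, hT3, hT4, hγQuad, hγF]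
end

section
/- Let γ be the real root in [0,1] of 8x^5 + 4x^4 − 12x^3 − 7x^2 + 2x + 4 = 0 and w = γ^2 + 2γ^3. There do not exist real numbers x₁₁, x₁₂, x₁₃, x₂₁, x₂₂, x₃₂, x₃₃ satisfying: γ(x₁₁+x₁₂+x₁₃) = x₂₁+x₂₂; γ²(x₁₁+x₁₂+x₁₃) = x₃₂+x₃₃; γ(x₁₁+x₂₁) = x₁₂+x₂₂+x₃₂; x₂₁ ≥ x₁₂+x₁₃; x₁₁ > 0; x₁₃, x₂₂, x₃₂, x₃₃, x₁₂+x₁₃, x₁₂+x₂₂ ≥ 0; and F > 0, where F = x₂₁(x₃₂−x₁₁−x₁₃) + x₂₂(x₃₂+x₃₃) − (w x₁₁² + x₁₂²)/2 + (x₂₁+x₂₂)²/2 + (w−1)x₁₁x₁₂. -/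
set_option maxHeartbeats 4000000

/-- The CSP of Lemma 2.3 specialized to `μ = γ` with
`x₁₄ = x₂₄ = x₃₄ = x₂₃ = 0` is unsatisfiable. -/
theorem stmt11 (γ w : ℝ) (hγ : γ ∈ Set.Icc (0 : ℝ) 1)
    (hroot : 8 * γ ^ 5 + 4 * γ ^ 4 - 12 * γ ^ 3 - 7 * γ ^ 2 + 2 * γ + 4 = 0)
    (hw : w = γ ^ 2 + 2 * γ ^ 3) :
    ¬ ∃ x11 x12 x13 x21 x22 x32 x33 : ℝ,
      γ * (x11 + x12 + x13) = x21 + x22 ∧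
      γ ^ 2 * (x11 + x12 + x13) = x32 + x33 ∧
      γ * (x11 + x21) = x12 + x22 + x32 ∧
      x21 ≥ x12 + x13 ∧
      x11 > 0 ∧ x13 ≥ 0 ∧ x22 ≥ 0 ∧ x32 ≥ 0 ∧ x33 ≥ 0 ∧
      x12 + x13 ≥ 0 ∧ x12 + x22 ≥ 0 ∧
      x21 * (x32 - x11 - x13) + x22 * (x32 + x33) -
          (w * x11 ^ 2 + x12 ^ 2) / 2 + (x21 + x22) ^ 2 / 2 +
          (w - 1) * x11 * x12 > 0 := by
  subst hw
  obtain ⟨hg0, hg1⟩ := hγ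
  rintro ⟨x11, x12, x13, x21, x22, x32, x33, h1, h2, h3, h4, h5, h6, h7, h8, h9, h10, h11, hF⟩
  have hlo : (71/100 : ℝ) ≤ γ := by
    by_contra hcon
    push_neg at hcon
    have hvp : (0:ℝ) < 71 - 100*γ := by linarith
    have f0 : (0:ℝ) < (71 - 100*γ)^5 := pow_pos hvp 5
    have f1 : (0:ℝ) ≤ (γ)^1 * (71 - 100*γ)^4 := mul_nonneg (pow_nonneg hg0 1) (pow_nonneg hvp.le 4)
    have f2 : (0:ℝ) ≤ (γ)^2 * (71 - 100*γ)^3 := mul_nonneg (pow_nonneg hg0 2) (pow_nonneg hvp.le 3)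
    have f3 : (0:ℝ) ≤ (γ)^3 * (71 - 100*γ)^2 := mul_nonneg (pow_nonneg hg0 3) (pow_nonneg hvp.le 2)
    have f4 : (0:ℝ) ≤ (γ)^4 * (71 - 100*γ)^1 := mul_nonneg (pow_nonneg hg0 4) (pow_nonneg hvp.le 1)
    have f5 : (0:ℝ) ≤ (γ)^5 := pow_nonneg hg0 5
    have idlo : 8 * γ ^ 5 + 4 * γ ^ 4 - 12 * γ ^ 3 - 7 * γ ^ 2 + 2 * γ + 4 = (4/1804229351) * (71 - 100*γ)^5 + (2142/1804229351) * (γ)^1 * (71 - 100*γ)^4 + (421513/1804229351) * (γ)^2 * (71 - 100*γ)^3 + (33638968/1804229351) * (γ)^3 * (71 - 100*γ)^2 + (752050324/1804229351) * (γ)^4 * (71 - 100*γ)^1 + (562187208/1804229351) * (γ)^5 := by ring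
    linarith [hroot, idlo, f0, f1, f2, f3, f4, f5]
  have hhi : γ ≤ (18/25 : ℝ) := by
    by_contra hcon
    push_neg at hcon
    have hup : (0:ℝ) < 25*γ - 18 := by linarith
    have hv1 : (0:ℝ) ≤ 1 - γ := by linarith
    have f5 : (0:ℝ) < (25*γ - 18)^5 := pow_pos hup 5
    have f0 : (0:ℝ) ≤ (1 - γ)^5 := pow_nonneg hv1 5
    have f1 : (0:ℝ) ≤ (25*γ - 18)^1 * (1 - γ)^4 := mul_nonneg (pow_nonneg hup.le 1) (pow_nonneg hv1 4)
    have f2 : (0:ℝ) ≤ (25*γ - 18)^2 * (1 - γ)^3 := mul_nonneg (pow_nonneg hup.le 2) (pow_nonneg hv1 3)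
    have f3 : (0:ℝ) ≤ (25*γ - 18)^3 * (1 - γ)^2 := mul_nonneg (pow_nonneg hup.le 3) (pow_nonneg hv1 2)
    have f4 : (0:ℝ) ≤ (25*γ - 18)^4 * (1 - γ)^1 := mul_nonneg (pow_nonneg hup.le 4) (pow_nonneg hv1 1)
    have idhi : -(8 * γ ^ 5 + 4 * γ ^ 4 - 12 * γ ^ 3 - 7 * γ ^ 2 + 2 * γ + 4) = (438356/16807) * (1 - γ)^5 + (1183706/16807) * (25*γ - 18)^1 * (1 - γ)^4 + (170887/16807) * (25*γ - 18)^2 * (1 - γ)^3 + (8861/16807) * (25*γ - 18)^3 * (1 - γ)^2 + (181/16807) * (25*γ - 18)^4 * (1 - γ)^1 + (1/16807) * (25*γ - 18)^5 := by ring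
    linarith [hroot, idhi, f0, f1, f2, f3, f4, f5]
  have e1 : x12 = γ*x11 - (1+γ)*x22 + x33 := by linear_combination h2 - h3 - γ*h1
  subst e1
  have e2 : x21 = γ*(x11 + (γ*x11 - (1+γ)*x22 + x33) + x13) - x22 := by linear_combination -h1
  subst e2
  have e3 : x32 = γ^2*(x11 + (γ*x11 - (1+γ)*x22 + x33) + x13) - x33 := by linear_combination -h2
  subst e3
  have hu : (0:ℝ) ≤ 100*γ - 71 := by linarith
  have hv : (0:ℝ) ≤ 72 - 100*γ := by linarith
  have b0 : (0:ℝ) ≤ (72 - 100*γ)^9 := pow_nonneg hv 9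
  have b9 : (0:ℝ) ≤ (100*γ - 71)^9 := pow_nonneg hu 9
  have b1 : (0:ℝ) ≤ (100*γ - 71)^1 * (72 - 100*γ)^8 := mul_nonneg (pow_nonneg hu 1) (pow_nonneg hv 8)
  have b2 : (0:ℝ) ≤ (100*γ - 71)^2 * (72 - 100*γ)^7 := mul_nonneg (pow_nonneg hu 2) (pow_nonneg hv 7)
  have b3 : (0:ℝ) ≤ (100*γ - 71)^3 * (72 - 100*γ)^6 := mul_nonneg (pow_nonneg hu 3) (pow_nonneg hv 6)
  have b4 : (0:ℝ) ≤ (100*γ - 71)^4 * (72 - 100*γ)^5 := mul_nonneg (pow_nonneg hu 4) (pow_nonneg hv 5)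
  have b5 : (0:ℝ) ≤ (100*γ - 71)^5 * (72 - 100*γ)^4 := mul_nonneg (pow_nonneg hu 5) (pow_nonneg hv 4)
  have b6 : (0:ℝ) ≤ (100*γ - 71)^6 * (72 - 100*γ)^3 := mul_nonneg (pow_nonneg hu 6) (pow_nonneg hv 3)
  have b7 : (0:ℝ) ≤ (100*γ - 71)^7 * (72 - 100*γ)^2 := mul_nonneg (pow_nonneg hu 7) (pow_nonneg hv 2)
  have b8 : (0:ℝ) ≤ (100*γ - 71)^8 * (72 - 100*γ)^1 := mul_nonneg (pow_nonneg hu 8) (pow_nonneg hv 1)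
  have hsumDf : (0:ℝ) ≤ (3909499530906856364991336622507/75196399895460206250000000000000) * ((72 - 100*γ)^9) + (2322234853596359571001557349372381/4962962393100373612500000000000000) * ((100*γ - 71)^1 * (72 - 100*γ)^8) + (4644456766965714711423483460828309/2481481196550186806250000000000000) * ((100*γ - 71)^2 * (72 - 100*γ)^7) + (2709259275735399124207173071134993/620370299137546701562500000000000) * ((100*γ - 71)^3 * (72 - 100*γ)^6) + (507984709783629623639037817466933/77546287392193337695312500000000) * ((100*γ - 71)^4 * (72 - 100*γ)^5) + (1354621873740431142707301699963941/206790099712515567187500000000000) * ((100*γ - 71)^5 * (72 - 100*γ)^4) + (451539217083424139287816827602629/103395049856257783593750000000000) * ((100*γ - 71)^6 * (72 - 100*γ)^3) + (290274306614816056876446245143343/155092574784386675390625000000000) * ((100*γ - 71)^7 * (72 - 100*γ)^2) + (9071045768926453826861725388443/19386571848048334423828125000000) * ((100*γ - 71)^8 * (72 - 100*γ)^1) + (62993219006126197137228324079/1211660740503020901489257812500) * ((100*γ - 71)^9) := add_nonneg (add_nonneg (add_nonneg (add_nonneg (add_nonneg (add_nonneg (add_nonneg (add_nonneg (add_nonneg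 (mul_nonneg (by norm_num : (0:ℝ) ≤ (3909499530906856364991336622507/75196399895460206250000000000000)) b0) (mul_nonneg (by norm_num : (0:ℝ) ≤ (2322234853596359571001557349372381/4962962393100373612500000000000000)) b1)) (mul_nonneg (by norm_num : (0:ℝ) ≤ (4644456766965714711423483460828309/2481481196550186806250000000000000)) b2)) (mul_nonneg (by norm_num : (0:ℝ) ≤ (2709259275735399124207173071134993/620370299137546701562500000000000)) b3)) (mul_nonneg (by norm_num : (0:ℝ) ≤ (507984709783629623639037817466933/77546287392193337695312500000000)) b4)) (mul_nonneg (by norm_num : (0:ℝ) ≤ (1354621873740431142707301699963941/206790099712515567187500000000000)) b5)) (mul_nonneg (by norm_num : (0:ℝ) ≤ (451539217083424139287816827602629/103395049856257783593750000000000)) b6)) (mul_nonneg (by norm_num : (0:ℝ) ≤ (290274306614816056876446245143343/155092574784386675390625000000000)) b7)) (mul_nonneg (by norm_num : (0:ℝ) ≤ (9071045768926453826861725388443/19386571848048334423828125000000)) b8)) (mul_nonneg (by norm_num : (0:ℝ) ≤ (62993219006126197137228324079/1211660740503020901489257812500)) b9)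
  have idDf : ((1087661/18936) + (-2381799203/12914352)*γ + (-2798163526151/95592033504)*γ^2 + (999883508382543/2288898135568)*γ^3 + (7280267217616323107/28108813553842824)*γ^4 + (-6897571307090665895/7027203388460706)*γ^5 + (-1485728032481326/4453234086477)*γ^6 + (4770243658226/4353112499)*γ^7 + (89570860/1176199)*γ^8 + (-1104240/2729)*γ^9) = (47/904) + ((3909499530906856364991336622507/75196399895460206250000000000000) * ((72 - 100*γ)^9) + (2322234853596359571001557349372381/4962962393100373612500000000000000) * ((100*γ - 71)^1 * (72 - 100*γ)^8) + (4644456766965714711423483460828309/2481481196550186806250000000000000) * ((100*γ - 71)^2 * (72 - 100*γ)^7) + (2709259275735399124207173071134993/620370299137546701562500000000000) * ((100*γ - 71)^3 * (72 - 100*γ)^6) + (507984709783629623639037817466933/77546287392193337695312500000000) * ((100*γ - 71)^4 * (72 - 100*γ)^5) + (1354621873740431142707301699963941/206790099712515567187500000000000) * ((100*γ - 71)^5 * (72 - 100*γ)^4) + (451539217083424139287816827602629/103395049856257783593750000000000) * ((100*γ - 71)^6 * (72 - 100*γ)^3) + (290274306614816056876446245143343/155092574784386675390625000000000) * ((100*γ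 - 71)^7 * (72 - 100*γ)^2) + (9071045768926453826861725388443/19386571848048334423828125000000) * ((100*γ - 71)^8 * (72 - 100*γ)^1) + (62993219006126197137228324079/1211660740503020901489257812500) * ((100*γ - 71)^9)) := by ring
  have cDf : ((47/904):ℝ) ≤ (1087661/18936) + (-2381799203/12914352)*γ + (-2798163526151/95592033504)*γ^2 + (999883508382543/2288898135568)*γ^3 + (7280267217616323107/28108813553842824)*γ^4 + (-6897571307090665895/7027203388460706)*γ^5 + (-1485728032481326/4453234086477)*γ^6 + (4770243658226/4353112499)*γ^7 + (89570860/1176199)*γ^8 + (-1104240/2729)*γ^9 := by rw [idDf]; exact le_add_of_nonneg_right hsumDf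
  have hsumpc : (0:ℝ) ≤ (18888595861221335036765653361715779/2622623386449357018000000000000000000) * ((72 - 100*γ)^9) + (37776952843014603923132263777254121/582805196988746004000000000000000000) * ((100*γ - 71)^1 * (72 - 100*γ)^8) + (151108101970910654895373595924848033/582805196988746004000000000000000000) * ((100*γ - 71)^2 * (72 - 100*γ)^7) + (66110038987427139643364593378302967/109275974435389875750000000000000000) * ((100*γ - 71)^3 * (72 - 100*γ)^6) + (66110173351324138888804975963877479/72850649623593250500000000000000000) * ((100*γ - 71)^4 * (72 - 100*γ)^5) + (528881059615331844096412944258411209/582805196988746004000000000000000000) * ((100*γ - 71)^5 * (72 - 100*γ)^4) + (1057759565062482652148185066967988691/1748415590966238012000000000000000000) * ((100*γ - 71)^6 * (72 - 100*γ)^3) + (75554092539081644585915384831674103/291402598494373002000000000000000000) * ((100*γ - 71)^7 * (72 - 100*γ)^2) + (2361067145302293823200220369883323/36425324811796625250000000000000000) * ((100*γ - 71)^8 * (72 - 100*γ)^1) + (295135200327028277664986748119297/40978490413271203406250000000000000) * ((100*γ - 71)^9) := add_nonneg (add_nonneg (add_nonneg (add_nonneg (add_nonneg (add_nonneg (add_nonneg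 (add_nonneg (add_nonneg (mul_nonneg (by norm_num : (0:ℝ) ≤ (18888595861221335036765653361715779/2622623386449357018000000000000000000)) b0) (mul_nonneg (by norm_num : (0:ℝ) ≤ (37776952843014603923132263777254121/582805196988746004000000000000000000)) b1)) (mul_nonneg (by norm_num : (0:ℝ) ≤ (151108101970910654895373595924848033/582805196988746004000000000000000000)) b2)) (mul_nonneg (by norm_num : (0:ℝ) ≤ (66110038987427139643364593378302967/109275974435389875750000000000000000)) b3)) (mul_nonneg (by norm_num : (0:ℝ) ≤ (66110173351324138888804975963877479/72850649623593250500000000000000000)) b4)) (mul_nonneg (by norm_num : (0:ℝ) ≤ (528881059615331844096412944258411209/582805196988746004000000000000000000)) b5)) (mul_nonneg (by norm_num : (0:ℝ) ≤ (1057759565062482652148185066967988691/1748415590966238012000000000000000000)) b6)) (mul_nonneg (by norm_num : (0:ℝ) ≤ (75554092539081644585915384831674103/291402598494373002000000000000000000)) b7)) (mul_nonneg (by norm_num : (0:ℝ) ≤ (2361067145302293823200220369883323/36425324811796625250000000000000000)) b8)) (mul_nonneg (by norm_num : (0:ℝ) ≤ (295135200327028277664986748119297/40978490413271203406250000000000000))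 b9)
  have idpc : ((3461186215/25665536) + (-71256148682347/161333559296)*γ + (-31468198391546593/829577161900032)*γ^2 + (46617558129921105571/46515576577966080)*γ^3 + (195205374822815522838797/331551400953597726720)*γ^4 + (-125567430206201199263/53963444165624630)*γ^5 + (-17351574914040089/25836312240165)*γ^6 + (20614740604846/8220271155)*γ^7 + (491557312/3197305)*γ^8 + (-3784696/4073)*γ^9) = (7/972) + ((18888595861221335036765653361715779/2622623386449357018000000000000000000) * ((72 - 100*γ)^9) + (37776952843014603923132263777254121/582805196988746004000000000000000000) * ((100*γ - 71)^1 * (72 - 100*γ)^8) + (151108101970910654895373595924848033/582805196988746004000000000000000000) * ((100*γ - 71)^2 * (72 - 100*γ)^7) + (66110038987427139643364593378302967/109275974435389875750000000000000000) * ((100*γ - 71)^3 * (72 - 100*γ)^6) + (66110173351324138888804975963877479/72850649623593250500000000000000000) * ((100*γ - 71)^4 * (72 - 100*γ)^5) + (528881059615331844096412944258411209/582805196988746004000000000000000000) * ((100*γ - 71)^5 * (72 - 100*γ)^4) + (1057759565062482652148185066967988691/1748415590966238012000000000000000000) * ((100*γ - 71)^6 * (72 - 100*γ)^3) + (75554092539081644585915384831674103/291402598494373002000000000000000000)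 * ((100*γ - 71)^7 * (72 - 100*γ)^2) + (2361067145302293823200220369883323/36425324811796625250000000000000000) * ((100*γ - 71)^8 * (72 - 100*γ)^1) + (295135200327028277664986748119297/40978490413271203406250000000000000) * ((100*γ - 71)^9)) := by ring
  have cpc : ((7/972):ℝ) ≤ (3461186215/25665536) + (-71256148682347/161333559296)*γ + (-31468198391546593/829577161900032)*γ^2 + (46617558129921105571/46515576577966080)*γ^3 + (195205374822815522838797/331551400953597726720)*γ^4 + (-125567430206201199263/53963444165624630)*γ^5 + (-17351574914040089/25836312240165)*γ^6 + (20614740604846/8220271155)*γ^7 + (491557312/3197305)*γ^8 + (-3784696/4073)*γ^9 := by rw [idpc]; exact le_add_of_nonneg_right hsumpc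
  have hsump1 : (0:ℝ) ≤ (1148973485418611757994181763166417173/13504438386470484982000000000000000000) * ((72 - 100*γ)^9) + (20681491552349616476327987020858099223/27008876772940969964000000000000000000) * ((100*γ - 71)^1 * (72 - 100*γ)^8) + (82725992229851366138821070646758279519/27008876772940969964000000000000000000) * ((100*γ - 71)^2 * (72 - 100*γ)^7) + (12064216242497693385913008703892644847/1688054798308810622750000000000000000) * ((100*γ - 71)^3 * (72 - 100*γ)^6) + (36192663617002163795329647677146651737/3376109596617621245500000000000000000) * ((100*γ - 71)^4 * (72 - 100*γ)^5) + (289541255308224497282527575333650713847/27008876772940969964000000000000000000) * ((100*γ - 71)^5 * (72 - 100*γ)^4) + (193027382038265417480543623517101530511/27008876772940969964000000000000000000) * ((100*γ - 71)^6 * (72 - 100*γ)^3) + (41362984864975062177034998107944322729/13504438386470484982000000000000000000) * ((100*γ - 71)^7 * (72 - 100*γ)^2) + (1292593328122772677661411839421993829/1688054798308810622750000000000000000) * ((100*γ - 71)^8 * (72 - 100*γ)^1) + (17952710581627318610108582829567399/211006849788601327843750000000000000) * ((100*γ - 71)^9) := add_nonneg (add_nonneg (add_nonneg (add_nonneg (add_nonneg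 (add_nonneg (add_nonneg (add_nonneg (add_nonneg (mul_nonneg (by norm_num : (0:ℝ) ≤ (1148973485418611757994181763166417173/13504438386470484982000000000000000000)) b0) (mul_nonneg (by norm_num : (0:ℝ) ≤ (20681491552349616476327987020858099223/27008876772940969964000000000000000000)) b1)) (mul_nonneg (by norm_num : (0:ℝ) ≤ (82725992229851366138821070646758279519/27008876772940969964000000000000000000)) b2)) (mul_nonneg (by norm_num : (0:ℝ) ≤ (12064216242497693385913008703892644847/1688054798308810622750000000000000000)) b3)) (mul_nonneg (by norm_num : (0:ℝ) ≤ (36192663617002163795329647677146651737/3376109596617621245500000000000000000)) b4)) (mul_nonneg (by norm_num : (0:ℝ) ≤ (289541255308224497282527575333650713847/27008876772940969964000000000000000000)) b5)) (mul_nonneg (by norm_num : (0:ℝ) ≤ (193027382038265417480543623517101530511/27008876772940969964000000000000000000)) b6)) (mul_nonneg (by norm_num : (0:ℝ) ≤ (41362984864975062177034998107944322729/13504438386470484982000000000000000000)) b7)) (mul_nonneg (by norm_num : (0:ℝ) ≤ (1292593328122772677661411839421993829/1688054798308810622750000000000000000)) b8)) (mul_nonneg (by norm_num : (0:ℝ)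 ≤ (17952710581627318610108582829567399/211006849788601327843750000000000000)) b9)
  have idp1 : ((8489440239/30318592) + (-78539559233787/86286712832)*γ + (-13677295161331559/137541020254208)*γ^2 + (585972403144218945243/280102287747694592)*γ^3 + (41735058388626990585197/34102453533281816576)*γ^4 + (-39880389390458664669/8325794319648881)*γ^5 + (-3264647783482573/2249606679181)*γ^6 + (8266268782008/1580890147)*γ^7 + (564869580/1983551)*γ^8 + (-924472/487)*γ^9) = (69/811) + ((1148973485418611757994181763166417173/13504438386470484982000000000000000000) * ((72 - 100*γ)^9) + (20681491552349616476327987020858099223/27008876772940969964000000000000000000) * ((100*γ - 71)^1 * (72 - 100*γ)^8) + (82725992229851366138821070646758279519/27008876772940969964000000000000000000) * ((100*γ - 71)^2 * (72 - 100*γ)^7) + (12064216242497693385913008703892644847/1688054798308810622750000000000000000) * ((100*γ - 71)^3 * (72 - 100*γ)^6) + (36192663617002163795329647677146651737/3376109596617621245500000000000000000) * ((100*γ - 71)^4 * (72 - 100*γ)^5) + (289541255308224497282527575333650713847/27008876772940969964000000000000000000) * ((100*γ - 71)^5 * (72 - 100*γ)^4) + (193027382038265417480543623517101530511/27008876772940969964000000000000000000)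 * ((100*γ - 71)^6 * (72 - 100*γ)^3) + (41362984864975062177034998107944322729/13504438386470484982000000000000000000) * ((100*γ - 71)^7 * (72 - 100*γ)^2) + (1292593328122772677661411839421993829/1688054798308810622750000000000000000) * ((100*γ - 71)^8 * (72 - 100*γ)^1) + (17952710581627318610108582829567399/211006849788601327843750000000000000) * ((100*γ - 71)^9)) := by ring
  have cp1 : ((69/811):ℝ) ≤ (8489440239/30318592) + (-78539559233787/86286712832)*γ + (-13677295161331559/137541020254208)*γ^2 + (585972403144218945243/280102287747694592)*γ^3 + (41735058388626990585197/34102453533281816576)*γ^4 + (-39880389390458664669/8325794319648881)*γ^5 + (-3264647783482573/2249606679181)*γ^6 + (8266268782008/1580890147)*γ^7 + (564869580/1983551)*γ^8 + (-924472/487)*γ^9 := by rw [idp1]; exact le_add_of_nonneg_right hsump1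
  have hsump2 : (0:ℝ) ≤ (2118875806490325629269406974409/2295715285499184000000000000000000) * ((72 - 100*γ)^9) + (57214419524007248347226769532301/6887145856497552000000000000000000) * ((100*γ - 71)^1 * (72 - 100*γ)^8) + (19071118959409499600158739654119/573928821374796000000000000000000) * ((100*γ - 71)^2 * (72 - 100*γ)^7) + (266984412080795483968245438982537/3443572928248776000000000000000000) * ((100*γ - 71)^3 * (72 - 100*γ)^6) + (266978353672914417718046782897009/2295715285499184000000000000000000) * ((100*γ - 71)^4 * (72 - 100*γ)^5) + (800943484368989621734903495391689/6887145856497552000000000000000000) * ((100*γ - 71)^5 * (72 - 100*γ)^4) + (266990384285666802320233934529191/3443572928248776000000000000000000) * ((100*γ - 71)^6 * (72 - 100*γ)^3) + (28607058342429027082841680339237/860893232062194000000000000000000) * ((100*γ - 71)^7 * (72 - 100*γ)^2) + (1141720983967864525648969139/137435062589750000000000000000) * ((100*γ - 71)^8 * (72 - 100*γ)^1) + (459824340064261806178939911/498202101887843750000000000000) * ((100*γ - 71)^9) := add_nonneg (add_nonneg (add_nonneg (add_nonneg (add_nonneg (add_nonneg (add_nonneg (add_nonneg (add_nonneg (mul_nonneg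 (by norm_num : (0:ℝ) ≤ (2118875806490325629269406974409/2295715285499184000000000000000000)) b0) (mul_nonneg (by norm_num : (0:ℝ) ≤ (57214419524007248347226769532301/6887145856497552000000000000000000)) b1)) (mul_nonneg (by norm_num : (0:ℝ) ≤ (19071118959409499600158739654119/573928821374796000000000000000000)) b2)) (mul_nonneg (by norm_num : (0:ℝ) ≤ (266984412080795483968245438982537/3443572928248776000000000000000000)) b3)) (mul_nonneg (by norm_num : (0:ℝ) ≤ (266978353672914417718046782897009/2295715285499184000000000000000000)) b4)) (mul_nonneg (by norm_num : (0:ℝ) ≤ (800943484368989621734903495391689/6887145856497552000000000000000000)) b5)) (mul_nonneg (by norm_num : (0:ℝ) ≤ (266990384285666802320233934529191/3443572928248776000000000000000000)) b6)) (mul_nonneg (by norm_num : (0:ℝ) ≤ (28607058342429027082841680339237/860893232062194000000000000000000)) b7)) (mul_nonneg (by norm_num : (0:ℝ) ≤ (1141720983967864525648969139/137435062589750000000000000000)) b8)) (mul_nonneg (by norm_num : (0:ℝ) ≤ (459824340064261806178939911/498202101887843750000000000000)) b9)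
  have idp2 : ((-2924021939/16261120) + (42836315767693/74248273920)*γ + (3805770521215937/38757598986240)*γ^2 + (-65805256986952191449/47943149945978880)*γ^3 + (-29282059075018171722247/35262186785267466240)*γ^4 + (442983923700785374/143482205343699)*γ^5 + (5854155227034061/5421242015505)*γ^6 + (-24562864615628/7123839705)*γ^7 + (-518241124/1819627)*γ^8 + (1912216/1471)*γ^9) = (1/1000) + ((2118875806490325629269406974409/2295715285499184000000000000000000) * ((72 - 100*γ)^9) + (57214419524007248347226769532301/6887145856497552000000000000000000) * ((100*γ - 71)^1 * (72 - 100*γ)^8) + (19071118959409499600158739654119/573928821374796000000000000000000) * ((100*γ - 71)^2 * (72 - 100*γ)^7) + (266984412080795483968245438982537/3443572928248776000000000000000000) * ((100*γ - 71)^3 * (72 - 100*γ)^6) + (266978353672914417718046782897009/2295715285499184000000000000000000) * ((100*γ - 71)^4 * (72 - 100*γ)^5) + (800943484368989621734903495391689/6887145856497552000000000000000000) * ((100*γ - 71)^5 * (72 - 100*γ)^4) + (266990384285666802320233934529191/3443572928248776000000000000000000) * ((100*γ - 71)^6 * (72 - 100*γ)^3) + (28607058342429027082841680339237/860893232062194000000000000000000)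 * ((100*γ - 71)^7 * (72 - 100*γ)^2) + (1141720983967864525648969139/137435062589750000000000000000) * ((100*γ - 71)^8 * (72 - 100*γ)^1) + (459824340064261806178939911/498202101887843750000000000000) * ((100*γ - 71)^9)) := by ring
  have cp2 : ((1/1000):ℝ) ≤ (-2924021939/16261120) + (42836315767693/74248273920)*γ + (3805770521215937/38757598986240)*γ^2 + (-65805256986952191449/47943149945978880)*γ^3 + (-29282059075018171722247/35262186785267466240)*γ^4 + (442983923700785374/143482205343699)*γ^5 + (5854155227034061/5421242015505)*γ^6 + (-24562864615628/7123839705)*γ^7 + (-518241124/1819627)*γ^8 + (1912216/1471)*γ^9 := by rw [idp2]; exact le_add_of_nonneg_right hsump2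
  have hsumrc : (0:ℝ) ≤ (3126642558472113631109923194485577/211505910335279092000000000000000000) * ((72 - 100*γ)^9) + (4443123264129586508895170153334587/33395670052938804000000000000000000) * ((100*γ - 71)^1 * (72 - 100*γ)^8) + (84419336233286740345981219375879271/158629432751459319000000000000000000) * ((100*γ - 71)^2 * (72 - 100*γ)^7) + (131318957266351725680392125595893837/105752955167639546000000000000000000) * ((100*γ - 71)^3 * (72 - 100*γ)^6) + (1181870509681401414395570608613812931/634517731005837276000000000000000000) * ((100*γ - 71)^4 * (72 - 100*γ)^5) + (1181870401609392409155843991901568917/634517731005837276000000000000000000) * ((100*γ - 71)^5 * (72 - 100*γ)^4) + (9161785313451827326974632338104961/7378113151230666000000000000000000) * ((100*γ - 71)^6 * (72 - 100*γ)^3) + (84419301862063106649927555419310947/158629432751459319000000000000000000) * ((100*γ - 71)^7 * (72 - 100*γ)^2) + (2638103005689658603769698274075447/19828679093932414875000000000000000) * ((100*γ - 71)^8 * (72 - 100*γ)^1) + (36640315447943715518877036801157/2478584886741551859375000000000000) * ((100*γ - 71)^9) := add_nonneg (add_nonneg (add_nonneg (add_nonneg (add_nonneg (add_nonneg (add_nonneg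 (add_nonneg (add_nonneg (mul_nonneg (by norm_num : (0:ℝ) ≤ (3126642558472113631109923194485577/211505910335279092000000000000000000)) b0) (mul_nonneg (by norm_num : (0:ℝ) ≤ (4443123264129586508895170153334587/33395670052938804000000000000000000)) b1)) (mul_nonneg (by norm_num : (0:ℝ) ≤ (84419336233286740345981219375879271/158629432751459319000000000000000000)) b2)) (mul_nonneg (by norm_num : (0:ℝ) ≤ (131318957266351725680392125595893837/105752955167639546000000000000000000)) b3)) (mul_nonneg (by norm_num : (0:ℝ) ≤ (1181870509681401414395570608613812931/634517731005837276000000000000000000)) b4)) (mul_nonneg (by norm_num : (0:ℝ) ≤ (1181870401609392409155843991901568917/634517731005837276000000000000000000)) b5)) (mul_nonneg (by norm_num : (0:ℝ) ≤ (9161785313451827326974632338104961/7378113151230666000000000000000000)) b6)) (mul_nonneg (by norm_num : (0:ℝ) ≤ (84419301862063106649927555419310947/158629432751459319000000000000000000)) b7)) (mul_nonneg (by norm_num : (0:ℝ) ≤ (2638103005689658603769698274075447/19828679093932414875000000000000000)) b8)) (mul_nonneg (by norm_num : (0:ℝ) ≤ (36640315447943715518877036801157/2478584886741551859375000000000000))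 b9)
  have idrc : ((35727421/7016448) + (-776928019693/39221944320)*γ + (123242520643249/9439414599680)*γ^2 + (124200271349407079/5960990319697920)*γ^3 + (18943560627550937329/1143516642995384320)*γ^4 + (-72159248999052829/837536603756385)*γ^5 + (33624217096177/1466789148435)*γ^6 + (22130601916/524790393)*γ^7 + (5893652/484571)*γ^8 + (-31624/1151)*γ^9) = (14/947) + ((3126642558472113631109923194485577/211505910335279092000000000000000000) * ((72 - 100*γ)^9) + (4443123264129586508895170153334587/33395670052938804000000000000000000) * ((100*γ - 71)^1 * (72 - 100*γ)^8) + (84419336233286740345981219375879271/158629432751459319000000000000000000) * ((100*γ - 71)^2 * (72 - 100*γ)^7) + (131318957266351725680392125595893837/105752955167639546000000000000000000) * ((100*γ - 71)^3 * (72 - 100*γ)^6) + (1181870509681401414395570608613812931/634517731005837276000000000000000000) * ((100*γ - 71)^4 * (72 - 100*γ)^5) + (1181870401609392409155843991901568917/634517731005837276000000000000000000) * ((100*γ - 71)^5 * (72 - 100*γ)^4) + (9161785313451827326974632338104961/7378113151230666000000000000000000) * ((100*γ - 71)^6 * (72 - 100*γ)^3) + (84419301862063106649927555419310947/158629432751459319000000000000000000)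 * ((100*γ - 71)^7 * (72 - 100*γ)^2) + (2638103005689658603769698274075447/19828679093932414875000000000000000) * ((100*γ - 71)^8 * (72 - 100*γ)^1) + (36640315447943715518877036801157/2478584886741551859375000000000000) * ((100*γ - 71)^9)) := by ring
  have crc : ((14/947):ℝ) ≤ (35727421/7016448) + (-776928019693/39221944320)*γ + (123242520643249/9439414599680)*γ^2 + (124200271349407079/5960990319697920)*γ^3 + (18943560627550937329/1143516642995384320)*γ^4 + (-72159248999052829/837536603756385)*γ^5 + (33624217096177/1466789148435)*γ^6 + (22130601916/524790393)*γ^7 + (5893652/484571)*γ^8 + (-31624/1151)*γ^9 := by rw [idrc]; exact le_add_of_nonneg_right hsumrc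
  have hsumr1 : (0:ℝ) ≤ (160551874499302586338910257217/4636258721556000000000000000000) * ((72 - 100*γ)^9) + (4334908718505820490375382260233/13908776164668000000000000000000) * ((100*γ - 71)^1 * (72 - 100*γ)^8) + (4334906988020838794669042636671/3477194041167000000000000000000) * ((100*γ - 71)^2 * (72 - 100*γ)^7) + (152101858086825004962031529747/52288632198000000000000000000) * ((100*γ - 71)^3 * (72 - 100*γ)^6) + (2889933853473145099436065258991/662322674508000000000000000000) * ((100*γ - 71)^4 * (72 - 100*γ)^5) + (8669803629884708194092738188251/1986968023524000000000000000000) * ((100*γ - 71)^5 * (72 - 100*γ)^4) + (963312266231117220821367700343/331161337254000000000000000000) * ((100*γ - 71)^6 * (72 - 100*γ)^3) + (1444969489705804505959791039049/1159064680389000000000000000000) * ((100*γ - 71)^7 * (72 - 100*γ)^2) + (15051764612755714858868628503/48294361682875000000000000000) * ((100*γ - 71)^8 * (72 - 100*γ)^1) + (627155772700534193272678639/18110385631078125000000000000) * ((100*γ - 71)^9) := add_nonneg (add_nonneg (add_nonneg (add_nonneg (add_nonneg (add_nonneg (add_nonneg (add_nonneg (add_nonneg (mul_nonneg (by norm_num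 : (0:ℝ) ≤ (160551874499302586338910257217/4636258721556000000000000000000)) b0) (mul_nonneg (by norm_num : (0:ℝ) ≤ (4334908718505820490375382260233/13908776164668000000000000000000)) b1)) (mul_nonneg (by norm_num : (0:ℝ) ≤ (4334906988020838794669042636671/3477194041167000000000000000000)) b2)) (mul_nonneg (by norm_num : (0:ℝ) ≤ (152101858086825004962031529747/52288632198000000000000000000)) b3)) (mul_nonneg (by norm_num : (0:ℝ) ≤ (2889933853473145099436065258991/662322674508000000000000000000)) b4)) (mul_nonneg (by norm_num : (0:ℝ) ≤ (8669803629884708194092738188251/1986968023524000000000000000000)) b5)) (mul_nonneg (by norm_num : (0:ℝ) ≤ (963312266231117220821367700343/331161337254000000000000000000)) b6)) (mul_nonneg (by norm_num : (0:ℝ) ≤ (1444969489705804505959791039049/1159064680389000000000000000000)) b7)) (mul_nonneg (by norm_num : (0:ℝ) ≤ (15051764612755714858868628503/48294361682875000000000000000)) b8)) (mul_nonneg (by norm_num : (0:ℝ) ≤ (627155772700534193272678639/18110385631078125000000000000)) b9)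
  have idr1 : ((-2144153235/14553088) + (37286844477929/78266507264)*γ + (1637011076186911/24888749309952)*γ^2 + (-2516845239161268883/2260728062320640)*γ^3 + (-6744130514556493273/10173276280442880)*γ^4 + (12565602935189201/4967420058810)*γ^5 + (4095088214082641/4967420058810)*γ^6 + (-861625793528/307885215)*γ^7 + (-186786418/1025145)*γ^8 + (1936772/1881)*γ^9) = (8/231) + ((160551874499302586338910257217/4636258721556000000000000000000) * ((72 - 100*γ)^9) + (4334908718505820490375382260233/13908776164668000000000000000000) * ((100*γ - 71)^1 * (72 - 100*γ)^8) + (4334906988020838794669042636671/3477194041167000000000000000000) * ((100*γ - 71)^2 * (72 - 100*γ)^7) + (152101858086825004962031529747/52288632198000000000000000000) * ((100*γ - 71)^3 * (72 - 100*γ)^6) + (2889933853473145099436065258991/662322674508000000000000000000) * ((100*γ - 71)^4 * (72 - 100*γ)^5) + (8669803629884708194092738188251/1986968023524000000000000000000) * ((100*γ - 71)^5 * (72 - 100*γ)^4) + (963312266231117220821367700343/331161337254000000000000000000) * ((100*γ - 71)^6 * (72 - 100*γ)^3) + (1444969489705804505959791039049/1159064680389000000000000000000) * ((100*γ - 71)^7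 * (72 - 100*γ)^2) + (15051764612755714858868628503/48294361682875000000000000000) * ((100*γ - 71)^8 * (72 - 100*γ)^1) + (627155772700534193272678639/18110385631078125000000000000) * ((100*γ - 71)^9)) := by ring
  have cr1 : ((8/231):ℝ) ≤ (-2144153235/14553088) + (37286844477929/78266507264)*γ + (1637011076186911/24888749309952)*γ^2 + (-2516845239161268883/2260728062320640)*γ^3 + (-6744130514556493273/10173276280442880)*γ^4 + (12565602935189201/4967420058810)*γ^5 + (4095088214082641/4967420058810)*γ^6 + (-861625793528/307885215)*γ^7 + (-186786418/1025145)*γ^8 + (1936772/1881)*γ^9 := by rw [idr1]; exact le_add_of_nonneg_right hsumr1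
  have hsumr2 : (0:ℝ) ≤ (175174808506722339023746612289/194469297508830000000000000000000) * ((72 - 100*γ)^9) + (9459641624725611876273046211473/1166815785052980000000000000000000) * ((100*γ - 71)^1 * (72 - 100*γ)^8) + (37838421232629357214522279988137/1166815785052980000000000000000000) * ((100*γ - 71)^2 * (72 - 100*γ)^7) + (1103609443848888861575842859483/14585197313162250000000000000000) * ((100*γ - 71)^3 * (72 - 100*γ)^6) + (719741229668700428985301868923/6341390136157500000000000000000) * ((100*γ - 71)^4 * (72 - 100*γ)^5) + (132432740813320658948413190789633/1166815785052980000000000000000000) * ((100*γ - 71)^5 * (72 - 100*γ)^4) + (88289299405000348645482573225721/1166815785052980000000000000000000) * ((100*γ - 71)^6 * (72 - 100*γ)^3) + (6306437063036179173471658918469/194469297508830000000000000000000) * ((100*γ - 71)^7 * (72 - 100*γ)^2) + (118245703214889718076472885719/14585197313162250000000000000000) * ((100*γ - 71)^8 * (72 - 100*γ)^1) + (912371250631881307537311897/1012860924525156250000000000000) * ((100*γ - 71)^9) := add_nonneg (add_nonneg (add_nonneg (add_nonneg (add_nonneg (add_nonneg (add_nonneg (add_nonneg (add_nonneg (mul_nonneg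 (by norm_num : (0:ℝ) ≤ (175174808506722339023746612289/194469297508830000000000000000000)) b0) (mul_nonneg (by norm_num : (0:ℝ) ≤ (9459641624725611876273046211473/1166815785052980000000000000000000)) b1)) (mul_nonneg (by norm_num : (0:ℝ) ≤ (37838421232629357214522279988137/1166815785052980000000000000000000)) b2)) (mul_nonneg (by norm_num : (0:ℝ) ≤ (1103609443848888861575842859483/14585197313162250000000000000000)) b3)) (mul_nonneg (by norm_num : (0:ℝ) ≤ (719741229668700428985301868923/6341390136157500000000000000000)) b4)) (mul_nonneg (by norm_num : (0:ℝ) ≤ (132432740813320658948413190789633/1166815785052980000000000000000000)) b5)) (mul_nonneg (by norm_num : (0:ℝ) ≤ (88289299405000348645482573225721/1166815785052980000000000000000000)) b6)) (mul_nonneg (by norm_num : (0:ℝ) ≤ (6306437063036179173471658918469/194469297508830000000000000000000)) b7)) (mul_nonneg (by norm_num : (0:ℝ) ≤ (118245703214889718076472885719/14585197313162250000000000000000)) b8)) (mul_nonneg (by norm_num : (0:ℝ) ≤ (912371250631881307537311897/1012860924525156250000000000000)) b9)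
  have idr2 : ((-1200743995/32825344) + (27240336190303/226297921536)*γ + (6367682022287363/1240565205860352)*γ^2 + (-20151177813706587187/77535325366272000)*γ^3 + (-1629299532732194784533/9956828032452096000)*γ^4 + (36461212851286103107/58340789252649000)*γ^5 + (593501583627379/3639929451750)*γ^6 + (-679432772669/1055970250)*γ^7 + (-9617509/192625)*γ^8 + (377432/1541)*γ^9) = (1/1000) + ((175174808506722339023746612289/194469297508830000000000000000000) * ((72 - 100*γ)^9) + (9459641624725611876273046211473/1166815785052980000000000000000000) * ((100*γ - 71)^1 * (72 - 100*γ)^8) + (37838421232629357214522279988137/1166815785052980000000000000000000) * ((100*γ - 71)^2 * (72 - 100*γ)^7) + (1103609443848888861575842859483/14585197313162250000000000000000) * ((100*γ - 71)^3 * (72 - 100*γ)^6) + (719741229668700428985301868923/6341390136157500000000000000000) * ((100*γ - 71)^4 * (72 - 100*γ)^5) + (132432740813320658948413190789633/1166815785052980000000000000000000) * ((100*γ - 71)^5 * (72 - 100*γ)^4) + (88289299405000348645482573225721/1166815785052980000000000000000000) * ((100*γ - 71)^6 * (72 - 100*γ)^3) + (6306437063036179173471658918469/194469297508830000000000000000000)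 * ((100*γ - 71)^7 * (72 - 100*γ)^2) + (118245703214889718076472885719/14585197313162250000000000000000) * ((100*γ - 71)^8 * (72 - 100*γ)^1) + (912371250631881307537311897/1012860924525156250000000000000) * ((100*γ - 71)^9)) := by ring
  have cr2 : ((1/1000):ℝ) ≤ (-1200743995/32825344) + (27240336190303/226297921536)*γ + (6367682022287363/1240565205860352)*γ^2 + (-20151177813706587187/77535325366272000)*γ^3 + (-1629299532732194784533/9956828032452096000)*γ^4 + (36461212851286103107/58340789252649000)*γ^5 + (593501583627379/3639929451750)*γ^6 + (-679432772669/1055970250)*γ^7 + (-9617509/192625)*γ^8 + (377432/1541)*γ^9 := by rw [idr2]; exact le_add_of_nonneg_right hsumr2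
  have hsumk4 : (0:ℝ) ≤ (2264811285817871083938229968119/58084037238932250000000000000000) * ((72 - 100*γ)^9) + (336324325224670310875616960507863/958386614442382125000000000000000) * ((100*γ - 71)^1 * (72 - 100*γ)^8) + (168162179218758100432751435205733/119798326805297765625000000000000) * ((100*γ - 71)^2 * (72 - 100*γ)^7) + (784757011638782548060532142432353/239596653610595531250000000000000) * ((100*γ - 71)^3 * (72 - 100*γ)^6) + (168162236585390824935411441950717/34228093372942218750000000000000) * ((100*γ - 71)^4 * (72 - 100*γ)^5) + (130792842846728500968557036436937/26621850401177281250000000000000) * ((100*γ - 71)^5 * (72 - 100*γ)^4) + (43597606139388208341949057621453/13310925200588640625000000000000) * ((100*γ - 71)^6 * (72 - 100*γ)^3) + (84081082686986051600935756715953/59899163402648882812500000000000) * ((100*γ - 71)^7 * (72 - 100*γ)^2) + (2627533881120667630921977663053/7487395425331110351562500000000) * ((100*γ - 71)^8 * (72 - 100*γ)^1) + (36493540940034743292202622743/935924428166388793945312500000) * ((100*γ - 71)^9) := add_nonneg (add_nonneg (add_nonneg (add_nonneg (add_nonneg (add_nonneg (add_nonneg (add_nonneg (add_nonneg (mul_nonneg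 (by norm_num : (0:ℝ) ≤ (2264811285817871083938229968119/58084037238932250000000000000000)) b0) (mul_nonneg (by norm_num : (0:ℝ) ≤ (336324325224670310875616960507863/958386614442382125000000000000000)) b1)) (mul_nonneg (by norm_num : (0:ℝ) ≤ (168162179218758100432751435205733/119798326805297765625000000000000)) b2)) (mul_nonneg (by norm_num : (0:ℝ) ≤ (784757011638782548060532142432353/239596653610595531250000000000000)) b3)) (mul_nonneg (by norm_num : (0:ℝ) ≤ (168162236585390824935411441950717/34228093372942218750000000000000)) b4)) (mul_nonneg (by norm_num : (0:ℝ) ≤ (130792842846728500968557036436937/26621850401177281250000000000000)) b5)) (mul_nonneg (by norm_num : (0:ℝ) ≤ (43597606139388208341949057621453/13310925200588640625000000000000)) b6)) (mul_nonneg (by norm_num : (0:ℝ) ≤ (84081082686986051600935756715953/59899163402648882812500000000000)) b7)) (mul_nonneg (by norm_num : (0:ℝ) ≤ (2627533881120667630921977663053/7487395425331110351562500000000)) b8)) (mul_nonneg (by norm_num : (0:ℝ) ≤ (36493540940034743292202622743/935924428166388793945312500000)) b9)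
  have idk4 : ((3985097/94752) + (-93759550309/697185216)*γ + (-5919924964787/244014825600)*γ^2 + (45244914095612857/140023840756800)*γ^3 + (3183580379364860051/16532814912213600)*γ^4 + (-2606448042748410634/3616553262046725)*γ^5 + (-13184268517459909/51298627830450)*γ^6 + (1889454496518/2323938925)*γ^7 + (360208154/5691279)*γ^8 + (-502228/1653)*γ^9) = (31/795) + ((2264811285817871083938229968119/58084037238932250000000000000000) * ((72 - 100*γ)^9) + (336324325224670310875616960507863/958386614442382125000000000000000) * ((100*γ - 71)^1 * (72 - 100*γ)^8) + (168162179218758100432751435205733/119798326805297765625000000000000) * ((100*γ - 71)^2 * (72 - 100*γ)^7) + (784757011638782548060532142432353/239596653610595531250000000000000) * ((100*γ - 71)^3 * (72 - 100*γ)^6) + (168162236585390824935411441950717/34228093372942218750000000000000) * ((100*γ - 71)^4 * (72 - 100*γ)^5) + (130792842846728500968557036436937/26621850401177281250000000000000) * ((100*γ - 71)^5 * (72 - 100*γ)^4) + (43597606139388208341949057621453/13310925200588640625000000000000) * ((100*γ - 71)^6 * (72 - 100*γ)^3) + (84081082686986051600935756715953/59899163402648882812500000000000) * ((100*γ - 71)^7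 * (72 - 100*γ)^2) + (2627533881120667630921977663053/7487395425331110351562500000000) * ((100*γ - 71)^8 * (72 - 100*γ)^1) + (36493540940034743292202622743/935924428166388793945312500000) * ((100*γ - 71)^9)) := by ring
  have ck4 : ((31/795):ℝ) ≤ (3985097/94752) + (-93759550309/697185216)*γ + (-5919924964787/244014825600)*γ^2 + (45244914095612857/140023840756800)*γ^3 + (3183580379364860051/16532814912213600)*γ^4 + (-2606448042748410634/3616553262046725)*γ^5 + (-13184268517459909/51298627830450)*γ^6 + (1889454496518/2323938925)*γ^7 + (360208154/5691279)*γ^8 + (-502228/1653)*γ^9 := by rw [idk4]; exact le_add_of_nonneg_right hsumk4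
  have eg1 : ((-1)*x33 + (-1)*x13 + (1)*γ*x33 + (1)*γ*x13 + (-1)*γ^2*x22 + (1)*γ^2*x11) = (γ*(x11 + (γ*x11 - (1+γ)*x22 + x33) + x13) - x22) - ((γ*x11 - (1+γ)*x22 + x33) + x13) := by ring
  have hG1 : (0:ℝ) ≤ (-1)*x33 + (-1)*x13 + (1)*γ*x33 + (1)*γ*x13 + (-1)*γ^2*x22 + (1)*γ^2*x11 := by rw [eg1]; exact sub_nonneg.mpr h4
  have eg2 : ((1)*x33 + (-1)*x22 + (1)*x13 + (-1)*γ*x22 + (1)*γ*x11) = ((γ*x11 - (1+γ)*x22 + x33) + x13) - 0 := by ring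
  have hG2 : (0:ℝ) ≤ (1)*x33 + (-1)*x22 + (1)*x13 + (-1)*γ*x22 + (1)*γ*x11 := by rw [eg2]; exact sub_nonneg.mpr h10
  have hF' : (0:ℝ) < (-1/2)*x33^2 + (2)*x22*x33 + (-1/2)*x22^2 + (1)*x13*x22 + (-1)*x11*x33 + (2)*x11*x22 + (-1)*γ*x33^2 + (2)*γ*x22*x33 + (-1)*γ*x22^2 + (-2)*γ*x13*x33 + (1)*γ*x13*x22 + (-1)*γ*x13^2 + (-3)*γ*x11*x33 + (3)*γ*x11*x22 + (-2)*γ*x11*x13 + (-2)*γ*x11^2 + (1/2)*γ^2*x33^2 + (1)*γ^2*x13*x33 + (1/2)*γ^2*x13^2 + (1)*γ^2*x11*x33 + (-3/2)*γ^2*x11^2 + (1)*γ^3*x33^2 + (-3)*γ^3*x22*x33 + (2)*γ^3*x22^2 + (2)*γ^3*x13*x33 + (-3)*γ^3*x13*x22 + (1)*γ^3*x13^2 + (5)*γ^3*x11*x33 + (-7)*γ^3*x11*x22 + (3)*γ^3*x11*x13 + (2)*γ^3*x11^2 + (-2)*γ^4*x22*x33 + (5/2)*γ^4*x22^2 + (-2)*γ^4*x13*x22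 + (2)*γ^4*x11*x33 + (-7)*γ^4*x11*x22 + (2)*γ^4*x11*x13 + (9/2)*γ^4*x11^2 + (1)*γ^5*x22^2 + (-2)*γ^5*x11*x22 + (1)*γ^5*x11^2 := by linarith [hF]
  have hc : (0:ℝ) ≤ x13 := h6
  have hl : (0:ℝ) ≤ x22 := h7
  have hm : (0:ℝ) ≤ x33 := h9
  have hP : (0:ℝ) ≤ ((3461186215/25665536) + (-71256148682347/161333559296)*γ + (-31468198391546593/829577161900032)*γ^2 + (46617558129921105571/46515576577966080)*γ^3 + (195205374822815522838797/331551400953597726720)*γ^4 + (-125567430206201199263/53963444165624630)*γ^5 + (-17351574914040089/25836312240165)*γ^6 + (20614740604846/8220271155)*γ^7 + (491557312/3197305)*γ^8 + (-3784696/4073)*γ^9) * x13 + ((8489440239/30318592) + (-78539559233787/86286712832)*γ + (-13677295161331559/137541020254208)*γ^2 + (585972403144218945243/280102287747694592)*γ^3 + (41735058388626990585197/34102453533281816576)*γ^4 + (-39880389390458664669/8325794319648881)*γ^5 + (-3264647783482573/2249606679181)*γ^6 + (8266268782008/1580890147)*γ^7 + (564869580/1983551)*γ^8 + (-924472/487)*γ^9)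 * ((-1)*x33 + (-1)*x13 + (1)*γ*x33 + (1)*γ*x13 + (-1)*γ^2*x22 + (1)*γ^2*x11) + ((-2924021939/16261120) + (42836315767693/74248273920)*γ + (3805770521215937/38757598986240)*γ^2 + (-65805256986952191449/47943149945978880)*γ^3 + (-29282059075018171722247/35262186785267466240)*γ^4 + (442983923700785374/143482205343699)*γ^5 + (5854155227034061/5421242015505)*γ^6 + (-24562864615628/7123839705)*γ^7 + (-518241124/1819627)*γ^8 + (1912216/1471)*γ^9) * ((1)*x33 + (-1)*x22 + (1)*x13 + (-1)*γ*x22 + (1)*γ*x11) := add_nonneg (add_nonneg (mul_nonneg (le_trans (by norm_num) cpc) hc) (mul_nonneg (le_trans (by norm_num) cp1) hG1)) (mul_nonneg (le_trans (by norm_num) cp2) hG2)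
  have hR : (0:ℝ) ≤ ((35727421/7016448) + (-776928019693/39221944320)*γ + (123242520643249/9439414599680)*γ^2 + (124200271349407079/5960990319697920)*γ^3 + (18943560627550937329/1143516642995384320)*γ^4 + (-72159248999052829/837536603756385)*γ^5 + (33624217096177/1466789148435)*γ^6 + (22130601916/524790393)*γ^7 + (5893652/484571)*γ^8 + (-31624/1151)*γ^9) * x13 + ((-2144153235/14553088) + (37286844477929/78266507264)*γ + (1637011076186911/24888749309952)*γ^2 + (-2516845239161268883/2260728062320640)*γ^3 + (-6744130514556493273/10173276280442880)*γ^4 + (12565602935189201/4967420058810)*γ^5 + (4095088214082641/4967420058810)*γ^6 + (-861625793528/307885215)*γ^7 + (-186786418/1025145)*γ^8 + (1936772/1881)*γ^9) * ((-1)*x33 + (-1)*x13 + (1)*γ*x33 + (1)*γ*x13 + (-1)*γ^2*x22 + (1)*γ^2*x11) + ((-1200743995/32825344) + (27240336190303/226297921536)*γ + (6367682022287363/1240565205860352)*γ^2 + (-20151177813706587187/77535325366272000)*γ^3 + (-1629299532732194784533/9956828032452096000)*γ^4 + (36461212851286103107/58340789252649000)*γ^5 + (593501583627379/3639929451750)*γ^6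 + (-679432772669/1055970250)*γ^7 + (-9617509/192625)*γ^8 + (377432/1541)*γ^9) * ((1)*x33 + (-1)*x22 + (1)*x13 + (-1)*γ*x22 + (1)*γ*x11) := add_nonneg (add_nonneg (mul_nonneg (le_trans (by norm_num) crc) hc) (mul_nonneg (le_trans (by norm_num) cr1) hG1)) (mul_nonneg (le_trans (by norm_num) cr2) hG2)
  have hlP : (0:ℝ) ≤ x22 * (((3461186215/25665536) + (-71256148682347/161333559296)*γ + (-31468198391546593/829577161900032)*γ^2 + (46617558129921105571/46515576577966080)*γ^3 + (195205374822815522838797/331551400953597726720)*γ^4 + (-125567430206201199263/53963444165624630)*γ^5 + (-17351574914040089/25836312240165)*γ^6 + (20614740604846/8220271155)*γ^7 + (491557312/3197305)*γ^8 + (-3784696/4073)*γ^9) * x13 + ((8489440239/30318592) + (-78539559233787/86286712832)*γ + (-13677295161331559/137541020254208)*γ^2 + (585972403144218945243/280102287747694592)*γ^3 + (41735058388626990585197/34102453533281816576)*γ^4 + (-39880389390458664669/8325794319648881)*γ^5 + (-3264647783482573/2249606679181)*γ^6 + (8266268782008/1580890147)*γ^7 + (564869580/1983551)*γ^8 + (-924472/487)*γ^9)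 * ((-1)*x33 + (-1)*x13 + (1)*γ*x33 + (1)*γ*x13 + (-1)*γ^2*x22 + (1)*γ^2*x11) + ((-2924021939/16261120) + (42836315767693/74248273920)*γ + (3805770521215937/38757598986240)*γ^2 + (-65805256986952191449/47943149945978880)*γ^3 + (-29282059075018171722247/35262186785267466240)*γ^4 + (442983923700785374/143482205343699)*γ^5 + (5854155227034061/5421242015505)*γ^6 + (-24562864615628/7123839705)*γ^7 + (-518241124/1819627)*γ^8 + (1912216/1471)*γ^9) * ((1)*x33 + (-1)*x22 + (1)*x13 + (-1)*γ*x22 + (1)*γ*x11)) := mul_nonneg hl hP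
  have hmR : (0:ℝ) ≤ x33 * (((35727421/7016448) + (-776928019693/39221944320)*γ + (123242520643249/9439414599680)*γ^2 + (124200271349407079/5960990319697920)*γ^3 + (18943560627550937329/1143516642995384320)*γ^4 + (-72159248999052829/837536603756385)*γ^5 + (33624217096177/1466789148435)*γ^6 + (22130601916/524790393)*γ^7 + (5893652/484571)*γ^8 + (-31624/1151)*γ^9) * x13 + ((-2144153235/14553088) + (37286844477929/78266507264)*γ + (1637011076186911/24888749309952)*γ^2 + (-2516845239161268883/2260728062320640)*γ^3 + (-6744130514556493273/10173276280442880)*γ^4 + (12565602935189201/4967420058810)*γ^5 + (4095088214082641/4967420058810)*γ^6 + (-861625793528/307885215)*γ^7 + (-186786418/1025145)*γ^8 + (1936772/1881)*γ^9) * ((-1)*x33 + (-1)*x13 + (1)*γ*x33 + (1)*γ*x13 + (-1)*γ^2*x22 + (1)*γ^2*x11) + ((-1200743995/32825344) + (27240336190303/226297921536)*γ + (6367682022287363/1240565205860352)*γ^2 + (-20151177813706587187/77535325366272000)*γ^3 + (-1629299532732194784533/9956828032452096000)*γ^4 + (36461212851286103107/58340789252649000)*γ^5 + (593501583627379/3639929451750)*γ^6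 + (-679432772669/1055970250)*γ^7 + (-9617509/192625)*γ^8 + (377432/1541)*γ^9) * ((1)*x33 + (-1)*x22 + (1)*x13 + (-1)*γ*x22 + (1)*γ*x11)) := mul_nonneg hm hR
  have hSQ : (0:ℝ) ≤ (((-3/2) + (-19/4)*γ + (-3/8)*γ^2 + (7)*γ^3 + (37/4)*γ^4) * x11 + ((-1) + (-3/2)*γ + (5/4)*γ^2 + (11/4)*γ^3 + (2)*γ^4) * x13 + ((27/16) + (171/32)*γ + (27/64)*γ^2 + (-63/8)*γ^3 + (-333/32)*γ^4) * x22 + ((-7/2) + (9/8)*γ + (65/16)*γ^2 + (163/32)*γ^3 + (-37/8)*γ^4) * x33)^2 := sq_nonneg _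
  have hK : (0:ℝ) ≤ ((3985097/94752) + (-93759550309/697185216)*γ + (-5919924964787/244014825600)*γ^2 + (45244914095612857/140023840756800)*γ^3 + (3183580379364860051/16532814912213600)*γ^4 + (-2606448042748410634/3616553262046725)*γ^5 + (-13184268517459909/51298627830450)*γ^6 + (1889454496518/2323938925)*γ^7 + (360208154/5691279)*γ^8 + (-502228/1653)*γ^9) * (x33 - γ*x22)^2 := mul_nonneg (le_trans (by norm_num) ck4) (sq_nonneg _)
  have hDfF : (0:ℝ) < ((1087661/18936) + (-2381799203/12914352)*γ + (-2798163526151/95592033504)*γ^2 + (999883508382543/2288898135568)*γ^3 + (7280267217616323107/28108813553842824)*γ^4 + (-6897571307090665895/7027203388460706)*γ^5 + (-1485728032481326/4453234086477)*γ^6 + (4770243658226/4353112499)*γ^7 + (89570860/1176199)*γ^8 + (-1104240/2729)*γ^9) * ((-1/2)*x33^2 + (2)*x22*x33 + (-1/2)*x22^2 + (1)*x13*x22 + (-1)*x11*x33 + (2)*x11*x22 + (-1)*γ*x33^2 + (2)*γ*x22*x33 + (-1)*γ*x22^2 + (-2)*γ*x13*x33 + (1)*γ*x13*x22 + (-1)*γ*x13^2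 + (-3)*γ*x11*x33 + (3)*γ*x11*x22 + (-2)*γ*x11*x13 + (-2)*γ*x11^2 + (1/2)*γ^2*x33^2 + (1)*γ^2*x13*x33 + (1/2)*γ^2*x13^2 + (1)*γ^2*x11*x33 + (-3/2)*γ^2*x11^2 + (1)*γ^3*x33^2 + (-3)*γ^3*x22*x33 + (2)*γ^3*x22^2 + (2)*γ^3*x13*x33 + (-3)*γ^3*x13*x22 + (1)*γ^3*x13^2 + (5)*γ^3*x11*x33 + (-7)*γ^3*x11*x22 + (3)*γ^3*x11*x13 + (2)*γ^3*x11^2 + (-2)*γ^4*x22*x33 + (5/2)*γ^4*x22^2 + (-2)*γ^4*x13*x22 + (2)*γ^4*x11*x33 + (-7)*γ^4*x11*x22 + (2)*γ^4*x11*x13 + (9/2)*γ^4*x11^2 + (1)*γ^5*x22^2 + (-2)*γ^5*x11*x22 + (1)*γ^5*x11^2) := mul_pos (lt_of_lt_of_le (by norm_num) cDf) hF'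
  have key : ((1087661/18936) + (-2381799203/12914352)*γ + (-2798163526151/95592033504)*γ^2 + (999883508382543/2288898135568)*γ^3 + (7280267217616323107/28108813553842824)*γ^4 + (-6897571307090665895/7027203388460706)*γ^5 + (-1485728032481326/4453234086477)*γ^6 + (4770243658226/4353112499)*γ^7 + (89570860/1176199)*γ^8 + (-1104240/2729)*γ^9) * ((-1/2)*x33^2 + (2)*x22*x33 + (-1/2)*x22^2 + (1)*x13*x22 + (-1)*x11*x33 + (2)*x11*x22 + (-1)*γ*x33^2 + (2)*γ*x22*x33 + (-1)*γ*x22^2 + (-2)*γ*x13*x33 + (1)*γ*x13*x22 + (-1)*γ*x13^2 + (-3)*γ*x11*x33 + (3)*γ*x11*x22 + (-2)*γ*x11*x13 + (-2)*γ*x11^2 + (1/2)*γ^2*x33^2 + (1)*γ^2*x13*x33 + (1/2)*γ^2*x13^2 + (1)*γ^2*x11*x33 + (-3/2)*γ^2*x11^2 + (1)*γ^3*x33^2 + (-3)*γ^3*x22*x33 + (2)*γ^3*x22^2 + (2)*γ^3*x13*x33 + (-3)*γ^3*x13*x22 + (1)*γ^3*x13^2 + (5)*γ^3*x11*x33 +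 (-7)*γ^3*x11*x22 + (3)*γ^3*x11*x13 + (2)*γ^3*x11^2 + (-2)*γ^4*x22*x33 + (5/2)*γ^4*x22^2 + (-2)*γ^4*x13*x22 + (2)*γ^4*x11*x33 + (-7)*γ^4*x11*x22 + (2)*γ^4*x11*x13 + (9/2)*γ^4*x11^2 + (1)*γ^5*x22^2 + (-2)*γ^5*x11*x22 + (1)*γ^5*x11^2) + (((-3/2) + (-19/4)*γ + (-3/8)*γ^2 + (7)*γ^3 + (37/4)*γ^4) * x11 + ((-1) + (-3/2)*γ + (5/4)*γ^2 + (11/4)*γ^3 + (2)*γ^4) * x13 + ((27/16) + (171/32)*γ + (27/64)*γ^2 + (-63/8)*γ^3 + (-333/32)*γ^4) * x22 + ((-7/2) + (9/8)*γ + (65/16)*γ^2 + (163/32)*γ^3 + (-37/8)*γ^4) * x33)^2 + x22 * (((3461186215/25665536) + (-71256148682347/161333559296)*γ + (-31468198391546593/829577161900032)*γ^2 + (46617558129921105571/46515576577966080)*γ^3 + (195205374822815522838797/331551400953597726720)*γ^4 + (-125567430206201199263/53963444165624630)*γ^5 + (-17351574914040089/25836312240165)*γ^6 + (20614740604846/8220271155)*γ^7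 + (491557312/3197305)*γ^8 + (-3784696/4073)*γ^9) * x13 + ((8489440239/30318592) + (-78539559233787/86286712832)*γ + (-13677295161331559/137541020254208)*γ^2 + (585972403144218945243/280102287747694592)*γ^3 + (41735058388626990585197/34102453533281816576)*γ^4 + (-39880389390458664669/8325794319648881)*γ^5 + (-3264647783482573/2249606679181)*γ^6 + (8266268782008/1580890147)*γ^7 + (564869580/1983551)*γ^8 + (-924472/487)*γ^9) * ((-1)*x33 + (-1)*x13 + (1)*γ*x33 + (1)*γ*x13 + (-1)*γ^2*x22 + (1)*γ^2*x11) + ((-2924021939/16261120) + (42836315767693/74248273920)*γ + (3805770521215937/38757598986240)*γ^2 + (-65805256986952191449/47943149945978880)*γ^3 + (-29282059075018171722247/35262186785267466240)*γ^4 + (442983923700785374/143482205343699)*γ^5 + (5854155227034061/5421242015505)*γ^6 + (-24562864615628/7123839705)*γ^7 + (-518241124/1819627)*γ^8 + (1912216/1471)*γ^9) * ((1)*x33 + (-1)*x22 + (1)*x13 + (-1)*γ*x22 + (1)*γ*x11)) + x33 * (((35727421/7016448) + (-776928019693/39221944320)*γ + (123242520643249/9439414599680)*γ^2 + (124200271349407079/5960990319697920)*γ^3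 + (18943560627550937329/1143516642995384320)*γ^4 + (-72159248999052829/837536603756385)*γ^5 + (33624217096177/1466789148435)*γ^6 + (22130601916/524790393)*γ^7 + (5893652/484571)*γ^8 + (-31624/1151)*γ^9) * x13 + ((-2144153235/14553088) + (37286844477929/78266507264)*γ + (1637011076186911/24888749309952)*γ^2 + (-2516845239161268883/2260728062320640)*γ^3 + (-6744130514556493273/10173276280442880)*γ^4 + (12565602935189201/4967420058810)*γ^5 + (4095088214082641/4967420058810)*γ^6 + (-861625793528/307885215)*γ^7 + (-186786418/1025145)*γ^8 + (1936772/1881)*γ^9) * ((-1)*x33 + (-1)*x13 + (1)*γ*x33 + (1)*γ*x13 + (-1)*γ^2*x22 + (1)*γ^2*x11) + ((-1200743995/32825344) + (27240336190303/226297921536)*γ + (6367682022287363/1240565205860352)*γ^2 + (-20151177813706587187/77535325366272000)*γ^3 + (-1629299532732194784533/9956828032452096000)*γ^4 + (36461212851286103107/58340789252649000)*γ^5 + (593501583627379/3639929451750)*γ^6 + (-679432772669/1055970250)*γ^7 + (-9617509/192625)*γ^8 + (377432/1541)*γ^9) * ((1)*x33 + (-1)*x22 + (1)*x13 + (-1)*γ*x22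 + (1)*γ*x11)) + ((3985097/94752) + (-93759550309/697185216)*γ + (-5919924964787/244014825600)*γ^2 + (45244914095612857/140023840756800)*γ^3 + (3183580379364860051/16532814912213600)*γ^4 + (-2606448042748410634/3616553262046725)*γ^5 + (-13184268517459909/51298627830450)*γ^6 + (1889454496518/2323938925)*γ^7 + (360208154/5691279)*γ^8 + (-502228/1653)*γ^9) * (x33 - γ*x22)^2 = 0 := by linear_combination ((12383089185530530969/363294347531157504)*x33^2 + (-182759865652471278661/2283216695786373120)*x22*x33 + (5925354793453/153960284160)*x22^2 + (24542607125375509/799138120433664)*x13*x33 + (-120904528601293281229/1785205367581409280)*x13*x22 + (1/4)*x13^2 + (-888833/75744)*x11*x33 + (4158917/151488)*x11*x22 + (3/4)*x11*x13 + (9/16)*x11^2 + (-1373888589020940623266991/8092160107252034052096)*γ*x33^2 + (19692351297055306855677000912257/53521124330925954244038131712)*γ*x22*x33 + (-2103905334672822911/19976423849902080)*γ*x22^2 + (-713960535300463784521/4131555205030556160)*γ*x13*x33 + (3431043125948031032088415/10411315720076178496512)*γ*x13*x22 + (-1040321/75744)*γ*x13^2 + (85015112644831/11775501303808)*γ*x11*x33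 + (-2027091812497691/17500152299520)*γ*x11*x22 + (-969311/37872)*γ*x11*x13 + (-1926787/75744)*γ*x11^2 + (910065423762003062735733023/3110587404511412280470400)*γ^2*x33^2 + (-1381285790286904948606563106038653/2603009987398747927758285066240)*γ^2*x22*x33 + (-1033598577188999996987/20267758671462973440)*γ^2*x22^2 + (86408018357710510812437/247681995054534589824)*γ^2*x13*x33 + (-1297036814322294944657507/2458777525899272962560)*γ^2*x13*x22 + (3126812593/51657408)*γ^2*x13^2 + (7823976060126342049/63069839321313792)*γ^2*x11*x33 + (454102748585339/2950389353472)*γ^2*x11*x22 + (1786361/16368)*γ^2*x11*x13 + (32393851/358732)*γ^2*x11^2 + (-236023412808995453605298059/2532938193350902218816000)*γ^3*x33^2 + (-17598565222219490693717939593974529/233626270959395027255760860544000)*γ^3*x22*x33 + (38781647482847842273452930067/87132104028330886589276160)*γ^3*x22^2 + (-40058542094406605105909/247021697859000966000)*γ^3*x13*x33 + (16486270336204668841296451/253901589856544228675520)*γ^3*x13*x22 + (-1367903882623/23898008376)*γ^3*x13^2 + (-62805273502594925806169/1214671382223306251904)*γ^3*x11*x33 + (-352467597410220945529/1196626816531653120)*γ^3*x11*x22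 + (-4451975561/93442848)*γ^3*x11*x13 + (1928822020183/95592033504)*γ^3*x11^2 + (-6589406582165864795430019/24729054433534309341780)*γ^4*x33^2 + (857206635193538019260204367978664871/1203819167607212495132949104829000)*γ^4*x22*x33 + (-35013466648292257945723581719/107941935023683568162308800)*γ^4*x22^2 + (-58580938265351896254097/179825511763801253790)*γ^4*x13*x33 + (6220083198073551417709729/11080247927389234659252)*γ^4*x13*x22 + (-447483469717/6527276052)*γ^4*x13^2 + (-1251583853974170256725847/3165755126501548053000)*γ^4*x11*x33 + (12159269617447016171401/29951007928435069344)*γ^4*x11*x22 + (-290668128583/1391521428)*γ^4*x11*x13 + (-5150192493570991/27466777626816)*γ^4*x11^2 + (7873605505097507/32752818442476)*γ^5*x33^2 + (-525989710258481671852571/2328509185833567024255)*γ^5*x22*x33 + (-33887384720159795852603857/122302874670059557681416)*γ^5*x22^2 + (2882929452434600/8188204610619)*γ^5*x13*x33 + (-3097424200497443/10063689095658)*γ^5*x13*x22 + (1944769965253/17412449996)*γ^5*x13^2 + (1775455929803695744661/7480052762714552130)*γ^5*x11*x33 + (43124086165715781933463/195372004265270858916)*γ^5*x11*x22 + (2501946258131/20664659334)*γ^5*x11*x13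 + (-2813083560292403023/28108813553842824)*γ^5*x11^2 + (22392715/2352398)*γ^6*x33^2 + (-961768861765/3000441411)*γ^6*x22*x33 + (188339371501962045/583836557988508)*γ^6*x22^2 + (22392715/1176199)*γ^6*x13*x33 + (-612007687/3190262)*γ^6*x13*x22 + (22392715/2352398)*γ^6*x13^2 + (2780555923039100/8188204610619)*γ^6*x11*x33 + (-536963410953808/794695859331)*γ^6*x11*x22 + (612007687/3190262)*γ^6*x11*x13 + (5104459628630353/17812936345908)*γ^6*x11^2 + (-138030/2729)*γ^7*x33^2 + (96589145/1176199)*γ^7*x22*x33 + (514864262673/17412449996)*γ^7*x22^2 + (-276060/2729)*γ^7*x13*x33 + (96589145/1176199)*γ^7*x13*x22 + (-138030/2729)*γ^7*x13^2 + (-215571005/1176199)*γ^7*x11*x33 + (200088588617/8706224998)*γ^7*x11*x22 + (-96589145/1176199)*γ^7*x11*x13 + (1727069743253/17412449996)*γ^7*x11^2 + (276060/2729)*γ^8*x22*x33 + (-215571005/2352398)*γ^8*x22^2 + (276060/2729)*γ^8*x13*x22 + (-276060/2729)*γ^8*x11*x33 + (334552865/1176199)*γ^8*x11*x22 + (-276060/2729)*γ^8*x11*x13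 + (-453534725/2352398)*γ^8*x11^2 + (-138030/2729)*γ^9*x22^2 + (276060/2729)*γ^9*x11*x22 + (-138030/2729)*γ^9*x11^2) * hroot
  linarith [key, hDfF, hSQ, hlP, hmR, hK]
end
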